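/- arXiv:2605.13090 — 8 statements merged into one kernel-verified Lean document; each statement's English description precedes it below -/
import Mathlib

section
/- Let n ≥ 2 and k ≥ 1. The map Ψ sending each s_i to the identity permutation and each ρ_i^α to the transposition (i, i+1) extends to a well-defined surjective homomorphism M_kVT_n → S_n, and M_kVT_n is isomorphic to the semidirect product of its kernel M_kVHT_n with S_n. -/
/-- Generators of the multi-virtual twin group `M_{k+1}VT_{m+2}`:
`s i` for `i = 0, …, m` and `ρ i α` for `i = 0, …, m`, `α = 0, …, k`. -/
inductive MVTGen (m k : ℕ) : Type
  | s : Fin (m + 1) → MVTGen m k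
  | rho : Fin (m + 1) → Fin (k + 1) → MVTGen m k

open FreeGroup in
/-- The defining relators of the multi-virtual twin group `M_{k+1}VT_{m+2}`. -/
def mvtRels (m k : ℕ) : Set (FreeGroup (MVTGen m k)) :=
  { r | (∃ i : Fin (m + 1), r = of (MVTGen.s i) * of (MVTGen.s i))
    ∨ (∃ i j : Fin (m + 1), (i.1 + 2 ≤ j.1 ∨ j.1 + 2 ≤ i.1) ∧
        r = of (MVTGen.s i) * of (MVTGen.s j) * (of (MVTGen.s i))⁻¹ * (of (MVTGen.s j))⁻¹)
    ∨ (∃ (i : Fin (m + 1)) (α : Fin (k + 1)),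
        r = of (MVTGen.rho i α) * of (MVTGen.rho i α))
    ∨ (∃ (i j : Fin (m + 1)) (α β : Fin (k + 1)), (i.1 + 2 ≤ j.1 ∨ j.1 + 2 ≤ i.1) ∧
        r = of (MVTGen.rho i α) * of (MVTGen.rho j β) *
            (of (MVTGen.rho i α))⁻¹ * (of (MVTGen.rho j β))⁻¹)
    ∨ (∃ (i j : Fin (m + 1)) (α : Fin (k + 1)), (i.1 + 2 ≤ j.1 ∨ j.1 + 2 ≤ i.1) ∧
        r = of (MVTGen.rho i α) * of (MVTGen.s j) *
            (of (MVTGen.rho i α))⁻¹ * (of (MVTGen.s j))⁻¹)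
    ∨ (∃ (i j : Fin (m + 1)) (α : Fin (k + 1)), j.1 = i.1 + 1 ∧
        r = of (MVTGen.rho i α) * of (MVTGen.rho j α) * of (MVTGen.rho i α) *
            (of (MVTGen.rho j α) * of (MVTGen.rho i α) * of (MVTGen.rho j α))⁻¹)
    ∨ (∃ (i j : Fin (m + 1)) (α β : Fin (k + 1)), j.1 = i.1 + 1 ∧ α.1 < β.1 ∧
        r = of (MVTGen.rho i α) * of (MVTGen.rho j β) * of (MVTGen.rho i β) *
            (of (MVTGen.rho j β) * of (MVTGen.rho i β) * of (MVTGen.rho j α))⁻¹)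
    ∨ (∃ (i j : Fin (m + 1)) (α β : Fin (k + 1)), j.1 = i.1 + 1 ∧ α.1 < β.1 ∧
        r = of (MVTGen.rho i α) * of (MVTGen.rho j α) * of (MVTGen.rho i β) *
            (of (MVTGen.rho j β) * of (MVTGen.rho i α) * of (MVTGen.rho j α))⁻¹)
    ∨ (∃ (i j : Fin (m + 1)) (α : Fin (k + 1)), j.1 = i.1 + 1 ∧
        r = of (MVTGen.rho i α) * of (MVTGen.rho j α) * of (MVTGen.s i) *
            (of (MVTGen.s j) * of (MVTGen.rho i α) * of (MVTGen.rho j α))⁻¹) }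

/-- The multi-virtual twin group `M_{k+1}VT_{m+2}`. -/
def MVT (m k : ℕ) : Type := PresentedGroup (mvtRels m k)

instance (m k : ℕ) : Group (MVT m k) := by unfold MVT; infer_instance

/-- The image in `M_{k+1}VT_{m+2}` of a generator. -/
def MVT.gen {m k : ℕ} (g : MVTGen m k) : MVT m k := PresentedGroup.of g

/-!
`Ψ` is defined on generators, and every relator maps to a relation among adjacent
transpositions. The content is the splitting: the `ρᵢ⁰` satisfy the Coxeter relations of type `A`,
and these relations present the symmetric group, so `(i, i+1) ↦ ρᵢ⁰` extends to a homomorphism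
`S_{m+2} → M_{k+1}VT_{m+2}`, a section of `Ψ`; a split surjection exhibits its source as the
semidirect product of its kernel with its target.

That the Coxeter relations present `S_{n+1}` is proved by induction on `n`: every `π` factors
uniquely as `(cycleRange (π 0))⁻¹ * π'` with `π'` fixing `0`, which dictates the lift of `π`
from the lift on the stabilizer of `0`, and a case analysis on the position of `π 0` shows that
this lift respects left multiplication by each adjacent transposition.
-/

open Equiv

section CoxeterTypeA

variable {G : Type*} [Group G]

structure IsCoxeterTypeA (t : ℕ → G) (n : ℕ) : Prop where
  mul_self : ∀ a < n, t a * t a = 1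
  commute : ∀ a b, a + 2 ≤ b → b < n → Commute (t a) (t b)
  braid : ∀ a, a + 2 ≤ n → t a * t (a + 1) * t a = t (a + 1) * t a * t (a + 1)

theorem IsCoxeterTypeA.shift {t : ℕ → G} {n : ℕ} (ht : IsCoxeterTypeA t (n + 1)) :
    IsCoxeterTypeA (fun a => t (a + 1)) n where
  mul_self a ha := ht.mul_self (a + 1) (by omega)
  commute a b hab hb := ht.commute (a + 1) (b + 1) (by omega) (by omega)
  braid a ha := ht.braid (a + 1) (by omega)

def descWord (t : ℕ → G) : ℕ → G
  | 0 => 1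
  | p + 1 => t p * descWord t p

variable {t : ℕ → G} {n : ℕ}

theorem IsCoxeterTypeA.commute_descWord (ht : IsCoxeterTypeA t n) {p i : ℕ} (hpi : p < i)
    (hi : i < n) : Commute (t i) (descWord t p) := by
  induction p with
  | zero => exact Commute.one_right _
  | succ p ih => exact ((ht.commute p i (by omega) hi).symm).mul_right (ih (by omega))

theorem IsCoxeterTypeA.descWord_mul (ht : IsCoxeterTypeA t n) {p i : ℕ} (hip : i + 2 ≤ p)
    (hp : p ≤ n) : descWord t p * t (i + 1) = t i * descWord t p := by
  induction p with
  | zero => omega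
  | succ p ih =>
    rcases (show p = i + 1 ∨ i + 2 ≤ p by omega) with rfl | hip
    · have hcomm := ht.commute_descWord (p := i) (i := i + 1) (by omega) (by omega)
      simp only [descWord]
      calc t (i + 1) * (t i * descWord t i) * t (i + 1)
          = t (i + 1) * t i * t (i + 1) * descWord t i := by simp only [mul_assoc, hcomm.eq]
        _ = t i * (t (i + 1) * (t i * descWord t i)) := by
            rw [← ht.braid i (by omega)]; simp only [mul_assoc]
    · simp only [descWord]
      rw [mul_assoc, ih hip (by omega), ← mul_assoc, ← mul_assoc,
        (ht.commute i p (by omega) (by omega)).eq]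

end CoxeterTypeA

theorem Equiv.swap_braid {α : Type*} [DecidableEq α] {a b c : α} (hab : a ≠ b)
    (hac : a ≠ c) (hbc : b ≠ c) :
    swap a b * swap b c * swap a b = swap b c * swap a b * swap b c := by
  ext x
  simp only [Perm.mul_apply, swap_apply_def]
  split_ifs <;> simp_all

namespace Fin

variable {n : ℕ}

theorem val_swap_apply (a b x : Fin n) :
    (swap a b x : ℕ) =
      if (x : ℕ) = a then (b : ℕ) else if (x : ℕ) = b then (a : ℕ) else (x : ℕ) := by
  simp only [swap_apply_def, Fin.ext_iff]
  split_ifs <;> rfl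

theorem val_cycleRange_apply (p x : Fin (n + 1)) :
    (cycleRange p x : ℕ) =
      if (x : ℕ) < p then (x : ℕ) + 1 else if (x : ℕ) = p then 0 else (x : ℕ) := by
  rcases lt_trichotomy x p with h | rfl | h
  · rw [coe_cycleRange_of_lt h, if_pos (Fin.lt_def.mp h)]
  · simp
  · simp [cycleRange_of_gt h, (Fin.lt_def.mp h).ne', not_lt.mpr (Fin.lt_def.mp h).le]

theorem commute_swap_castSucc_succ {i j : Fin (n + 1)} (h : (i : ℕ) + 2 ≤ j ∨ (j : ℕ) + 2 ≤ i) :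
    Commute (swap i.castSucc i.succ) (swap j.castSucc j.succ) := by
  refine (Perm.disjoint_swap_swap ?_).commute
  simp only [List.nodup_cons, List.mem_cons, Fin.ext_iff, val_castSucc,
    val_succ, List.not_mem_nil, List.nodup_nil, or_false, not_false_eq_true, and_true]
  omega

theorem swap_castSucc_succ_braid {i j : Fin (n + 1)} (h : (j : ℕ) = i + 1) :
    swap i.castSucc i.succ * swap j.castSucc j.succ * swap i.castSucc i.succ =
      swap j.castSucc j.succ * swap i.castSucc i.succ * swap j.castSucc j.succ := by
  have hj : j.castSucc = i.succ := Fin.ext (by simp [h])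
  rw [hj]
  apply swap_braid <;> simp only [ne_eq, Fin.ext_iff, val_castSucc, val_succ, h] <;> omega

theorem cycleRange_mul_swap_of_lt {p : Fin (n + 2)} {i : Fin (n + 1)} (h : p < i.castSucc) :
    cycleRange p * swap i.castSucc i.succ = swap i.castSucc i.succ * cycleRange p := by
  rw [Fin.lt_def] at h
  ext x
  simp only [Perm.mul_apply, val_cycleRange_apply, val_swap_apply, val_succ, val_castSucc] at *
  split_ifs <;> first | contradiction | omega

theorem cycleRange_mul_swap_of_succ_lt {p : Fin (n + 2)} {i : Fin n} (h : i.succ.castSucc < p) :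
    cycleRange p * swap i.castSucc.castSucc i.castSucc.succ =
      swap i.succ.castSucc i.succ.succ * cycleRange p := by
  rw [Fin.lt_def] at h
  ext x
  simp only [Perm.mul_apply, val_cycleRange_apply, val_swap_apply, val_succ, val_castSucc] at *
  split_ifs <;> first | contradiction | omega

theorem cycleRange_swap_apply_mul_swap {p : Fin (n + 2)} {i : Fin (n + 1)}
    (hp : p = i.castSucc ∨ p = i.succ) :
    cycleRange (swap i.castSucc i.succ p) * swap i.castSucc i.succ = cycleRange p := by
  have key : cycleRange i.succ * swap i.castSucc i.succ = cycleRange i.castSucc := by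
    ext x
    simp only [Perm.mul_apply, val_cycleRange_apply, val_swap_apply, val_succ, val_castSucc]
    split_ifs <;> first | contradiction | omega
  rcases hp with rfl | rfl
  · rw [swap_apply_left, key]
  · rw [swap_apply_right, ← key, mul_assoc, swap_mul_self, mul_one]

end Fin

namespace Equiv.Perm

variable {n : ℕ}

noncomputable def extendZero (n : ℕ) : Perm (Fin (n + 1)) →* Perm (Fin (n + 2)) :=
  viaEmbeddingHom (Fin.succEmb _)

theorem extendZero_injective : Function.Injective (extendZero n) :=
  viaEmbeddingHom_injective _

theorem extendZero_apply_zero (e : Perm (Fin (n + 1))) : extendZero n e 0 = 0 :=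
  viaEmbedding_apply_of_notMem _ _ _ fun ⟨x, hx⟩ => Fin.succ_ne_zero x hx

theorem extendZero_apply_succ (e : Perm (Fin (n + 1))) (x : Fin (n + 1)) :
    extendZero n e x.succ = (e x).succ :=
  viaEmbedding_apply e (Fin.succEmb _) x

theorem extendZero_swap (a b : Fin (n + 1)) :
    extendZero n (swap a b) = swap a.succ b.succ := by
  ext1 x
  cases x using Fin.cases with
  | zero => rw [extendZero_apply_zero, swap_apply_of_ne_of_ne (Fin.succ_ne_zero a).symm
      (Fin.succ_ne_zero b).symm]
  | succ x => rw [extendZero_apply_succ, (Fin.succ_injective _).swap_apply]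

theorem decomposeFin_symm_zero (e : Perm (Fin (n + 1))) :
    decomposeFin.symm (0, e) = extendZero n e := by
  ext1 x
  cases x using Fin.cases with
  | zero => rw [decomposeFin_symm_apply_zero, extendZero_apply_zero]
  | succ x => rw [decomposeFin_symm_apply_succ, extendZero_apply_succ, swap_self, refl_apply]

noncomputable def tailPerm (π : Perm (Fin (n + 2))) : Perm (Fin (n + 1)) :=
  (decomposeFin ((π 0).cycleRange * π)).2

theorem extendZero_tailPerm (π : Perm (Fin (n + 2))) :
    extendZero n (tailPerm π) = (π 0).cycleRange * π := by
  set ρ := (π 0).cycleRange * π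
  have hfst : (decomposeFin ρ).1 = 0 := by
    have h := decomposeFin_symm_apply_zero (decomposeFin ρ).1 (decomposeFin ρ).2
    rw [Prod.mk.eta, symm_apply_apply] at h
    rw [← h]
    exact Fin.cycleRange_self (π 0)
  have hρ : decomposeFin ρ = (0, tailPerm π) := Prod.ext hfst rfl
  rw [← decomposeFin_symm_zero, ← hρ, symm_apply_apply]

theorem tailPerm_one : tailPerm (1 : Perm (Fin (n + 2))) = 1 :=
  extendZero_injective <| by
    rw [extendZero_tailPerm, map_one, one_apply, Fin.cycleRange_zero, one_mul]

theorem tailPerm_swap_mul_of_eq {π : Perm (Fin (n + 2))} {i : Fin (n + 1)}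
    (h : π 0 = i.castSucc ∨ π 0 = i.succ) : tailPerm (swap i.castSucc i.succ * π) = tailPerm π :=
  extendZero_injective <| by
    rw [extendZero_tailPerm, extendZero_tailPerm, mul_apply, ← mul_assoc,
      Fin.cycleRange_swap_apply_mul_swap h]

theorem tailPerm_swap_mul_of_lt {π : Perm (Fin (n + 2))} {i : Fin n}
    (h : π 0 < i.succ.castSucc) :
    tailPerm (swap i.succ.castSucc i.succ.succ * π) = swap i.castSucc i.succ * tailPerm π :=
  extendZero_injective <| by
    rw [map_mul, extendZero_swap, extendZero_tailPerm, extendZero_tailPerm, mul_apply,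
      swap_apply_of_ne_of_ne h.ne (h.trans Fin.castSucc_lt_succ).ne, ← mul_assoc, ← mul_assoc,
      Fin.cycleRange_mul_swap_of_lt h, Fin.succ_castSucc]

theorem tailPerm_swap_mul_of_succ_lt {π : Perm (Fin (n + 2))} {i : Fin n}
    (h : i.succ.castSucc < π 0) :
    tailPerm (swap i.castSucc.castSucc i.castSucc.succ * π) =
      swap i.castSucc i.succ * tailPerm π :=
  extendZero_injective <| by
    have hlt : i.castSucc.succ < π 0 := by rwa [Fin.succ_castSucc]
    rw [map_mul, extendZero_swap, extendZero_tailPerm, extendZero_tailPerm, mul_apply,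
      swap_apply_of_ne_of_ne (Fin.castSucc_lt_succ.trans hlt).ne' hlt.ne', ← mul_assoc,
      ← mul_assoc, Fin.cycleRange_mul_swap_of_succ_lt h, Fin.succ_castSucc]

end Equiv.Perm

section PermLift

open Perm

variable {G : Type*} [Group G] {t : ℕ → G} {n : ℕ}

/-- Since `π = (cycleRange (π 0))⁻¹ * extendZero (tailPerm π)` and `descWord t p` is the word for
`(cycleRange p)⁻¹ = swap (p-1) p * ⋯ * swap 0 1`, this is the value forced on `π` by a lift
extending `f`. -/
noncomputable def extendLift (t : ℕ → G) (f : Perm (Fin (n + 1)) →* G)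
    (π : Perm (Fin (n + 2))) : G :=
  descWord t (π 0) * f (tailPerm π)

theorem extendLift_one (f : Perm (Fin (n + 1)) →* G) : extendLift t f 1 = 1 := by
  rw [extendLift, tailPerm_one, map_one, one_apply, Fin.val_zero, descWord, one_mul]

theorem extendLift_swap_mul (ht : IsCoxeterTypeA t (n + 1)) {f : Perm (Fin (n + 1)) →* G}
    (hf : ∀ j : Fin n, f (swap j.castSucc j.succ) = t (j + 1)) (i : Fin (n + 1))
    (π : Perm (Fin (n + 2))) :
    extendLift t f (swap i.castSucc i.succ * π) = t i * extendLift t f π := by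
  have hπ := (π 0).is_lt
  rcases (show (π 0 : ℕ) < i ∨ (π 0 : ℕ) = i ∨ (π 0 : ℕ) = i + 1 ∨ (i : ℕ) + 1 < π 0 by omega)
    with hlt | heq | heq | hgt
  · obtain ⟨j, rfl⟩ := Fin.exists_succ_eq.mpr (by rintro rfl; simp at hlt : i ≠ 0)
    have hlt' : π 0 < j.succ.castSucc := Fin.lt_def.mpr hlt
    rw [Fin.val_succ] at hlt
    rw [extendLift, extendLift, tailPerm_swap_mul_of_lt hlt', map_mul, hf, mul_apply,
      swap_apply_of_ne_of_ne hlt'.ne (hlt'.trans Fin.castSucc_lt_succ).ne, ← mul_assoc,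
      ← mul_assoc, Fin.val_succ, (ht.commute_descWord hlt (by omega)).eq]
  · have h0 : π 0 = i.castSucc := Fin.ext heq
    rw [extendLift, extendLift, tailPerm_swap_mul_of_eq (Or.inl h0), mul_apply, h0,
      swap_apply_left, Fin.val_succ, Fin.val_castSucc, descWord, mul_assoc]
  · have h0 : π 0 = i.succ := Fin.ext heq
    rw [extendLift, extendLift, tailPerm_swap_mul_of_eq (Or.inr h0), mul_apply, h0,
      swap_apply_right, Fin.val_succ, Fin.val_castSucc, descWord]
    simp only [← mul_assoc, ht.mul_self i i.is_lt, one_mul]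
  · obtain ⟨j, rfl⟩ :=
      Fin.exists_castSucc_eq.mpr (by rintro rfl; simp at hgt; omega : i ≠ Fin.last n)
    simp only [Fin.val_castSucc] at hgt
    have hgt' : j.succ.castSucc < π 0 := Fin.lt_def.mpr hgt
    rw [extendLift, extendLift, tailPerm_swap_mul_of_succ_lt hgt', map_mul, hf, mul_apply,
      swap_apply_of_ne_of_ne (Fin.ne_of_val_ne (by simp only [Fin.val_castSucc]; omega))
      (Fin.ne_of_val_ne (by simp only [Fin.val_succ, Fin.val_castSucc]; omega)), ← mul_assoc,
      ht.descWord_mul (by omega) (by omega), mul_assoc, Fin.val_castSucc]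

theorem exists_monoidHom_perm_of_isCoxeterTypeA (ht : IsCoxeterTypeA t n) :
    ∃ f : Perm (Fin (n + 1)) →* G, ∀ i : Fin n, f (swap i.castSucc i.succ) = t i := by
  induction n generalizing t with
  | zero => exact ⟨1, fun i => i.elim0⟩
  | succ n ih =>
    obtain ⟨f, hf⟩ := ih ht.shift
    have hswap (i : Fin (n + 1)) : extendLift t f (swap i.castSucc i.succ) = t i := by
      rw [← mul_one (swap _ _), extendLift_swap_mul ht hf, extendLift_one, mul_one]
    refine ⟨MonoidHom.ofClosureMEqTopLeft _ (mclosure_swap_castSucc_succ _) (extendLift_one f)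
      ?_, hswap⟩
    rintro _ ⟨i, rfl⟩ π
    rw [extendLift_swap_mul ht hf, hswap]

end PermLift

theorem MonoidHom.exists_mulEquiv_ker_semidirectProduct {E G : Type*} [Group E] [Group G]
    (f : E →* G) (s : G →* E) (hs : f.comp s = MonoidHom.id G) :
    ∃ φ : G →* MulAut f.ker, Nonempty (E ≃* f.ker ⋊[φ] G) := by
  have hs' : Function.RightInverse s f := DFunLike.congr_fun hs
  let S : GroupExtension f.ker E G :=
    { inl := f.ker.subtype
      rightHom := f
      inl_injective := Subtype.val_injective
      range_inl_eq_ker_rightHom := f.ker.range_subtype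
      rightHom_surjective := hs'.surjective }
  let σ : S.Splitting := { s with rightInverse_rightHom := hs' }
  exact ⟨σ.conjAct, ⟨σ.semidirectProductMulEquiv.symm⟩⟩

namespace MVT

variable {m k : ℕ}

theorem gen_rho_mul_self (i : Fin (m + 1)) (α : Fin (k + 1)) :
    gen (MVTGen.rho i α) * gen (MVTGen.rho i α) = (1 : MVT m k) :=
  PresentedGroup.one_of_mem (Or.inr <| Or.inr <| Or.inl ⟨i, α, rfl⟩)

theorem commute_gen_rho {i j : Fin (m + 1)} (h : (i : ℕ) + 2 ≤ j ∨ (j : ℕ) + 2 ≤ i)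
    (α β : Fin (k + 1)) : Commute (gen (MVTGen.rho i α) : MVT m k) (gen (MVTGen.rho j β)) :=
  mul_inv_eq_iff_eq_mul.mp <| mul_inv_eq_one.mp <|
    PresentedGroup.one_of_mem (Or.inr <| Or.inr <| Or.inr <| Or.inl ⟨i, j, α, β, h, rfl⟩)

theorem gen_rho_braid {i j : Fin (m + 1)} (h : (j : ℕ) = i + 1) (α : Fin (k + 1)) :
    (gen (MVTGen.rho i α) * gen (MVTGen.rho j α) * gen (MVTGen.rho i α) : MVT m k) =
      gen (MVTGen.rho j α) * gen (MVTGen.rho i α) * gen (MVTGen.rho j α) :=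
  mul_inv_eq_one.mp <|
    PresentedGroup.one_of_mem
      (Or.inr <| Or.inr <| Or.inr <| Or.inr <| Or.inr <| Or.inl ⟨i, j, α, h, rfl⟩)

theorem isCoxeterTypeA_gen_rho (m k : ℕ) :
    IsCoxeterTypeA (fun a => (gen (MVTGen.rho (Fin.ofNat (m + 1) a) 0) : MVT m k)) (m + 1) where
  mul_self a _ := gen_rho_mul_self _ _
  commute a b hab hb := commute_gen_rho (by
    rw [Fin.val_ofNat, Fin.val_ofNat, Nat.mod_eq_of_lt hb, Nat.mod_eq_of_lt (by omega)]; omega) _ _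
  braid a ha := gen_rho_braid (by
    rw [Fin.val_ofNat, Fin.val_ofNat, Nat.mod_eq_of_lt (by omega), Nat.mod_eq_of_lt (by omega)]) _

def permGen : MVTGen m k → Equiv.Perm (Fin (m + 2))
  | .s _ => 1
  | .rho i _ => Equiv.swap i.castSucc i.succ

theorem lift_permGen_eq_one : ∀ r ∈ mvtRels m k, FreeGroup.lift permGen r = 1 := by
  rintro r (⟨i, rfl⟩ | ⟨i, j, -, rfl⟩ | ⟨i, α, rfl⟩ | ⟨i, j, α, β, hij, rfl⟩ |
      ⟨i, j, α, -, rfl⟩ | ⟨i, j, α, hij, rfl⟩ | ⟨i, j, α, β, hij, -, rfl⟩ |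
      ⟨i, j, α, β, hij, -, rfl⟩ | ⟨i, j, α, -, rfl⟩) <;>
    simp only [map_mul, map_inv, FreeGroup.lift_apply_of, permGen]
  · group
  · group
  · exact Equiv.swap_mul_self _ _
  · rw [(Fin.commute_swap_castSucc_succ hij).eq]; group
  · group
  · rw [Fin.swap_castSucc_succ_braid hij]; group
  · rw [Fin.swap_castSucc_succ_braid hij]; group
  · rw [Fin.swap_castSucc_succ_braid hij]; group
  · group

def toPerm (m k : ℕ) : MVT m k →* Equiv.Perm (Fin (m + 2)) :=
  PresentedGroup.toGroup lift_permGen_eq_one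

theorem toPerm_gen (g : MVTGen m k) : toPerm m k (gen g) = permGen g :=
  PresentedGroup.toGroup.of _

end MVT

/-- The map `Ψ` sending each `sᵢ` to the identity permutation and each `ρᵢ^α` to the
transposition `(i, i+1)` extends to a well-defined surjective homomorphism
`M_{k+1}VT_{m+2} → S_{m+2}`, and `M_{k+1}VT_{m+2}` is isomorphic to the semidirect
product of its kernel `M_{k+1}VHT_{m+2}` with `S_{m+2}`. -/
theorem mvt_semidirect_semipure (m k : ℕ) :
    ∃ Ψ : MVT m k →* Equiv.Perm (Fin (m + 2)),
      Function.Surjective Ψ ∧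
      (∀ i : Fin (m + 1), Ψ (MVT.gen (MVTGen.s i)) = 1) ∧
      (∀ (i : Fin (m + 1)) (α : Fin (k + 1)),
        Ψ (MVT.gen (MVTGen.rho i α)) = Equiv.swap i.castSucc i.succ) ∧
      (∃ φ : Equiv.Perm (Fin (m + 2)) →* MulAut Ψ.ker,
        Nonempty (MVT m k ≃* Ψ.ker ⋊[φ] Equiv.Perm (Fin (m + 2)))) := by
  obtain ⟨s, hs⟩ := exists_monoidHom_perm_of_isCoxeterTypeA (MVT.isCoxeterTypeA_gen_rho m k)
  have hsplit : (MVT.toPerm m k).comp s = MonoidHom.id _ := by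
    refine MonoidHom.eq_of_eqOn_denseM (Equiv.Perm.mclosure_swap_castSucc_succ _) ?_
    rintro _ ⟨i, rfl⟩
    rw [MonoidHom.comp_apply, hs, Fin.ofNat_val_eq_self, MVT.toPerm_gen]
    rfl
  exact ⟨MVT.toPerm m k, fun g => ⟨s g, DFunLike.congr_fun hsplit g⟩,
    fun _ => MVT.toPerm_gen _, fun _ _ => MVT.toPerm_gen _,
    (MVT.toPerm m k).exists_mulEquiv_ker_semidirectProduct s hsplit⟩
end

section
/- Fix n ≥ 3, k ≥ 1, nonzero y_0,…,y_{k−1} ∈ ℂ, a ∈ ℂ, and b ∈ ℂ*. Define n×n matrices A_i equal to the identity except in rows/columns i, i+1 where it is the block [[−a, −(a²−1)/b],[b, a]], and R_i^α equal to the identity except in rows/columns i, i+1 where it is [[0, 1/y_α],[y_α, 0]]. Then the assignment s_i ↦ A_i, ρ_i^α ↦ R_i^α satisfies all defining relations of M_kVT_n, hence extends to a representation ζ_8 : M_kVT_n → GL_n(ℂ). -/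
/-- The `n × n` matrix equal to the identity except for the `2 × 2` block
`[[a, b], [c, d]]` in rows and columns `i, i+1`. -/
def locMat (n : ℕ) (i : ℕ) (a b c d : ℂ) : Matrix (Fin n) (Fin n) ℂ :=
  Matrix.of fun p q =>
    if p.1 = i ∧ q.1 = i then a
    else if p.1 = i ∧ q.1 = i + 1 then b
    else if p.1 = i + 1 ∧ q.1 = i then c
    else if p.1 = i + 1 ∧ q.1 = i + 1 then d
    else if p = q then 1 else 0

namespace Matrix

def embedMatrix (R : Type*) [Zero R] [One R] {k n : Type*} [DecidableEq n] (e : k ↪ n) :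
    Matrix n k R :=
  of fun p t => if p = e t then 1 else 0

variable {R : Type*} {k l n : Type*}

section Semiring

variable [NonAssocSemiring R]

theorem embedMatrix_transpose_mul_self [Fintype n] [DecidableEq n] [DecidableEq k] (e : k ↪ n) :
    (embedMatrix R e)ᵀ * embedMatrix R e = 1 := by
  ext t u
  simp [embedMatrix, mul_apply, one_apply, eq_comm]

theorem embedMatrix_transpose_mul_of_disjoint {k' : Type*} [Fintype n] [DecidableEq n]
    (e : k ↪ n) (e' : k' ↪ n) (h : Disjoint (Set.range e) (Set.range e')) :
    (embedMatrix R e)ᵀ * embedMatrix R e' = 0 := by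
  ext t u
  simp only [embedMatrix, mul_apply, transpose_apply, of_apply, zero_apply]
  refine Finset.sum_eq_zero fun p _ => ?_
  have : ¬ (p = e t ∧ p = e' u) := fun ⟨h₁, h₂⟩ =>
    Set.disjoint_left.mp h ⟨t, h₁.symm⟩ ⟨u, h₂.symm⟩
  split_ifs <;> simp_all

theorem embedMatrix_trans [Fintype k] [DecidableEq k] [DecidableEq n] (g : l ↪ k) (e : k ↪ n) :
    embedMatrix R (g.trans e) = embedMatrix R e * embedMatrix R g := by
  ext p t
  simp [embedMatrix, mul_apply]

end Semiring

variable [CommRing R] [Fintype k] [DecidableEq k] [Fintype n] [DecidableEq n]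

/-- `B` acting on the coordinates in the range of `e`, and the identity on the others. -/
def extendBlock (e : k ↪ n) : Matrix k k R →* Matrix n n R where
  toFun B := 1 + embedMatrix R e * (B - 1) * (embedMatrix R e)ᵀ
  map_one' := by simp
  map_mul' B C := by
    set S := embedMatrix R e
    have hS : Sᵀ * S = 1 := embedMatrix_transpose_mul_self e
    have hcross : S * (B - 1) * Sᵀ * (S * (C - 1) * Sᵀ) = S * ((B - 1) * (C - 1)) * Sᵀ := by
      simp only [Matrix.mul_assoc]; rw [← Matrix.mul_assoc Sᵀ, hS, Matrix.one_mul]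
    have hBC : B * C - 1 = (B - 1) + (C - 1) + (B - 1) * (C - 1) := by noncomm_ring
    rw [add_mul, one_mul, mul_add, mul_one, hcross, hBC, Matrix.mul_add, Matrix.mul_add,
      Matrix.add_mul, Matrix.add_mul]
    abel

theorem extendBlock_apply (e : k ↪ n) (B : Matrix k k R) :
    extendBlock e B = 1 + embedMatrix R e * (B - 1) * (embedMatrix R e)ᵀ := rfl

theorem extendBlock_trans [Fintype l] [DecidableEq l] (g : l ↪ k) (e : k ↪ n)
    (B : Matrix l l R) : extendBlock (g.trans e) B = extendBlock e (extendBlock g B) := by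
  simp only [extendBlock_apply, embedMatrix_trans, transpose_mul, add_sub_cancel_left,
    Matrix.mul_assoc]

theorem extendBlock_commute {k' : Type*} [Fintype k'] [DecidableEq k'] (e : k ↪ n)
    (e' : k' ↪ n) (h : Disjoint (Set.range e) (Set.range e')) (B : Matrix k k R)
    (C : Matrix k' k' R) : Commute (extendBlock e B) (extendBlock e' C) := by
  set S := embedMatrix R e
  set S' := embedMatrix R e'
  have hSS' : Sᵀ * S' = 0 := embedMatrix_transpose_mul_of_disjoint e e' h
  have hS'S : S'ᵀ * S = 0 := embedMatrix_transpose_mul_of_disjoint e' e h.symm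
  set X := S * (B - 1) * Sᵀ
  set Y := S' * (C - 1) * S'ᵀ
  have hXY : X * Y = 0 := by
    simp only [X, Y, Matrix.mul_assoc]; rw [← Matrix.mul_assoc Sᵀ, hSS']; simp
  have hYX : Y * X = 0 := by
    simp only [X, Y, Matrix.mul_assoc]; rw [← Matrix.mul_assoc S'ᵀ, hS'S]; simp
  change (1 + X) * (1 + Y) = (1 + Y) * (1 + X)
  simp only [add_mul, mul_add, one_mul, mul_one, hXY, hYX, add_zero]
  abel

end Matrix

open Matrix

namespace Fin

def window {n : ℕ} (i k : ℕ) (h : i + k ≤ n) : Fin k ↪ Fin n :=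
  ⟨fun t => ⟨i + t, by omega⟩, fun t u htu => by simpa [Fin.ext_iff] using htu⟩

@[simp]
theorem val_window {n : ℕ} (i k : ℕ) (h : i + k ≤ n) (t : Fin k) :
    (window i k h t : ℕ) = i + t :=
  rfl

theorem window_trans {n k : ℕ} (i j l : ℕ) (hi : i + k ≤ n) (hj : j + l ≤ k) :
    (window j l hj).trans (window i k hi) = window (i + j) l (by omega) := by
  ext t; simp [add_assoc]

theorem disjoint_range_window {n : ℕ} (i j : ℕ) (hij : i + 2 ≤ j) (hj : j + 2 ≤ n) :
    Disjoint (Set.range (window i 2 (n := n) (by omega))) (Set.range (window j 2 hj)) := by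
  rw [Set.disjoint_left]
  rintro _ ⟨t, rfl⟩ ⟨u, hu⟩
  simp [Fin.ext_iff] at hu
  omega

end Fin

theorem locMat_eq_extendBlock {n : ℕ} (i : ℕ) (h : i + 2 ≤ n) (a b c d : ℂ) :
    locMat n i a b c d = extendBlock (Fin.window i 2 h) !![a, b; c, d] := by
  ext p q
  simp [locMat, extendBlock_apply, embedMatrix, mul_apply, Fin.sum_univ_two, one_apply,
    Fin.ext_iff]
  split_ifs <;> first | ring1 | omega

section ThreeStrands

variable {R : Type*} [CommRing R]

def upperBlock : Matrix (Fin 2) (Fin 2) R →* Matrix (Fin 3) (Fin 3) R :=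
  extendBlock (Fin.window 0 2 (by norm_num))

def lowerBlock : Matrix (Fin 2) (Fin 2) R →* Matrix (Fin 3) (Fin 3) R :=
  extendBlock (Fin.window 1 2 (by norm_num))

theorem upperBlock_of (a b c d : R) :
    upperBlock !![a, b; c, d] = !![a, b, 0; c, d, 0; 0, 0, 1] := by
  ext p q
  fin_cases p <;> fin_cases q <;>
    simp [upperBlock, extendBlock_apply, embedMatrix, mul_apply, Fin.sum_univ_two] <;>
    simp [Fin.ext_iff]

theorem lowerBlock_of (a b c d : R) :
    lowerBlock !![a, b; c, d] = !![1, 0, 0; 0, a, b; 0, c, d] := by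
  ext p q
  fin_cases p <;> fin_cases q <;>
    simp [lowerBlock, extendBlock_apply, embedMatrix, mul_apply, Fin.sum_univ_two] <;>
    simp [Fin.ext_iff]

theorem extendBlock_window_braid {n : ℕ} (i j : ℕ) (h : i + 3 ≤ n) (hj : j = i + 1)
    {B₁ B₂ B₃ C₁ C₂ C₃ : Matrix (Fin 2) (Fin 2) R}
    (h₃ : upperBlock B₁ * lowerBlock B₂ * upperBlock B₃ =
      lowerBlock C₁ * upperBlock C₂ * lowerBlock C₃) :
    extendBlock (Fin.window (n := n) i 2 (by omega)) B₁ *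
        extendBlock (Fin.window j 2 (by omega)) B₂ *
        extendBlock (Fin.window i 2 (by omega)) B₃ =
      extendBlock (Fin.window (n := n) j 2 (by omega)) C₁ *
        extendBlock (Fin.window i 2 (by omega)) C₂ *
        extendBlock (Fin.window j 2 (by omega)) C₃ := by
  subst hj
  have hu (B : Matrix (Fin 2) (Fin 2) R) :
      extendBlock (Fin.window i 2 (by omega)) B =
        extendBlock (Fin.window i 3 h) (upperBlock B) := by
    rw [upperBlock, ← extendBlock_trans, Fin.window_trans]; rfl
  have hl (B : Matrix (Fin 2) (Fin 2) R) :
      extendBlock (Fin.window (i + 1) 2 (by omega)) B =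
        extendBlock (Fin.window i 3 h) (lowerBlock B) := by
    rw [lowerBlock, ← extendBlock_trans, Fin.window_trans]
  simp only [hu, hl, ← map_mul, h₃]

end ThreeStrands

section Blocks

variable {K : Type*} [Field K]

def rhoBlock (y : K) : Matrix (Fin 2) (Fin 2) K := !![0, y⁻¹; y, 0]

def sBlock (a b : K) : Matrix (Fin 2) (Fin 2) K := !![-a, -((a ^ 2 - 1) / b); b, a]

theorem rhoBlock_mul_self {y : K} (hy : y ≠ 0) : rhoBlock y * rhoBlock y = 1 := by
  ext p q; fin_cases p <;> fin_cases q <;> simp [rhoBlock, mul_apply, hy]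

theorem sBlock_mul_self (a : K) {b : K} (hb : b ≠ 0) : sBlock a b * sBlock a b = 1 := by
  ext p q; fin_cases p <;> fin_cases q <;> simp [sBlock, mul_apply] <;> field_simp <;> ring

theorem rhoBlock_braid_left (y : K) (B : Matrix (Fin 2) (Fin 2) K) :
    upperBlock (rhoBlock y) * lowerBlock (rhoBlock y) * upperBlock B =
      lowerBlock B * upperBlock (rhoBlock y) * lowerBlock (rhoBlock y) := by
  rw [eta_fin_two B]
  simp only [rhoBlock, upperBlock_of, lowerBlock_of]
  ext p q; fin_cases p <;> fin_cases q <;> simp [mul_apply, Fin.sum_univ_three] <;> ring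

theorem rhoBlock_braid_right (y : K) (B : Matrix (Fin 2) (Fin 2) K) :
    upperBlock B * lowerBlock (rhoBlock y) * upperBlock (rhoBlock y) =
      lowerBlock (rhoBlock y) * upperBlock (rhoBlock y) * lowerBlock B := by
  rw [eta_fin_two B]
  simp only [rhoBlock, upperBlock_of, lowerBlock_of]
  ext p q; fin_cases p <;> fin_cases q <;> simp [mul_apply, Fin.sum_univ_three] <;> ring

end Blocks

def MVTGen.index {m k : ℕ} : MVTGen m k → Fin (m + 1)
  | .s i => i
  | .rho i _ => i

theorem lift_eq_one_of_mem_mvtRels {m k : ℕ} {G : Type*} [Group G] (F : MVTGen m k → G)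
    (hsq : ∀ g, F g * F g = 1)
    (hcomm : ∀ g h, g.index.1 + 2 ≤ h.index.1 → Commute (F g) (F h))
    (hρρ : ∀ (i j : Fin (m + 1)) (α : Fin (k + 1)), j.1 = i.1 + 1 →
      F (.rho i α) * F (.rho j α) * F (.rho i α) = F (.rho j α) * F (.rho i α) * F (.rho j α))
    (hρρ₁ : ∀ (i j : Fin (m + 1)) (α β : Fin (k + 1)), j.1 = i.1 + 1 → α.1 < β.1 →
      F (.rho i α) * F (.rho j β) * F (.rho i β) = F (.rho j β) * F (.rho i β) * F (.rho j α))
    (hρρ₂ : ∀ (i j : Fin (m + 1)) (α β : Fin (k + 1)), j.1 = i.1 + 1 → α.1 < β.1 →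
      F (.rho i α) * F (.rho j α) * F (.rho i β) = F (.rho j β) * F (.rho i α) * F (.rho j α))
    (hρs : ∀ (i j : Fin (m + 1)) (α : Fin (k + 1)), j.1 = i.1 + 1 →
      F (.rho i α) * F (.rho j α) * F (.s i) = F (.s j) * F (.rho i α) * F (.rho j α)) :
    ∀ r ∈ mvtRels m k, FreeGroup.lift F r = 1 := by
  have hfar : ∀ g h, g.index.1 + 2 ≤ h.index.1 ∨ h.index.1 + 2 ≤ g.index.1 →
      F g * F h * (F g)⁻¹ * (F h)⁻¹ = 1 := by
    rintro g h (hgh | hhg)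
    · rw [(hcomm g h hgh).eq]; group
    · rw [← (hcomm h g hhg).eq]; group
  rintro r (⟨i, rfl⟩ | ⟨i, j, hij, rfl⟩ | ⟨i, α, rfl⟩ | ⟨i, j, α, β, hij, rfl⟩ |
    ⟨i, j, α, hij, rfl⟩ | ⟨i, j, α, hj, rfl⟩ | ⟨i, j, α, β, hj, hαβ, rfl⟩ |
    ⟨i, j, α, β, hj, hαβ, rfl⟩ | ⟨i, j, α, hj, rfl⟩) <;>
    simp only [map_mul, map_inv, FreeGroup.lift_apply_of]
  · exact hsq _
  · exact hfar (.s i) (.s j) hij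
  · exact hsq _
  · exact hfar (.rho i α) (.rho j β) hij
  · exact hfar (.rho i α) (.s j) hij
  · exact mul_inv_eq_one.mpr (hρρ i j α hj)
  · exact mul_inv_eq_one.mpr (hρρ₁ i j α β hj hαβ)
  · exact mul_inv_eq_one.mpr (hρρ₂ i j α β hj hαβ)
  · exact mul_inv_eq_one.mpr (hρs i j α hj)

section Zeta8

variable {K : Type*} [Field K] {m k : ℕ}

def zeta8Block (y : Fin (k + 1) → K) (a b : K) : MVTGen m k → Matrix (Fin 2) (Fin 2) K
  | .s _ => sBlock a b
  | .rho _ α => rhoBlock (y α)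

def zeta8Mat (y : Fin (k + 1) → K) (a b : K) (g : MVTGen (m + 1) k) :
    Matrix (Fin (m + 3)) (Fin (m + 3)) K :=
  extendBlock (Fin.window g.index 2 (by have := g.index.2; omega)) (zeta8Block y a b g)

theorem zeta8Mat_mul_self {y : Fin (k + 1) → K} (hy : ∀ α, y α ≠ 0) (a : K) {b : K} (hb : b ≠ 0)
    (g : MVTGen (m + 1) k) : zeta8Mat y a b g * zeta8Mat y a b g = 1 := by
  rw [zeta8Mat, ← map_mul]
  cases g with
  | s i => rw [zeta8Block, sBlock_mul_self a hb, map_one]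
  | rho i α => rw [zeta8Block, rhoBlock_mul_self (hy α), map_one]

theorem zeta8Mat_commute (y : Fin (k + 1) → K) (a b : K) (g h : MVTGen (m + 1) k)
    (hgh : g.index.1 + 2 ≤ h.index.1) : Commute (zeta8Mat y a b g) (zeta8Mat y a b h) :=
  extendBlock_commute _ _ (Fin.disjoint_range_window _ _ hgh (by have := h.index.2; omega)) _ _

end Zeta8

/-- The assignment `sᵢ ↦` (identity except block `[[-a, -(a²-1)/b],[b, a]]` at rows/columns
`i, i+1`) and `ρᵢ^α ↦` (identity except block `[[0, 1/y_α],[y_α, 0]]`) satisfies all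
defining relations of `M_{k+1}VT_{m+3}`, hence extends to a representation
`ζ₈ : M_{k+1}VT_{m+3} → GL_{m+3}(ℂ)`. -/
theorem mvt_rep_zeta8 (m k : ℕ) (y : Fin (k + 1) → ℂ) (hy : ∀ α, y α ≠ 0)
    (a b : ℂ) (hb : b ≠ 0) :
    ∃ ζ : MVT (m + 1) k →* GL (Fin (m + 3)) ℂ,
      (∀ i : Fin (m + 2),
        ((ζ (MVT.gen (MVTGen.s i)) : GL (Fin (m + 3)) ℂ) :
          Matrix (Fin (m + 3)) (Fin (m + 3)) ℂ) =
            locMat (m + 3) i.1 (-a) (-((a ^ 2 - 1) / b)) b a) ∧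
      (∀ (i : Fin (m + 2)) (α : Fin (k + 1)),
        ((ζ (MVT.gen (MVTGen.rho i α)) : GL (Fin (m + 3)) ℂ) :
          Matrix (Fin (m + 3)) (Fin (m + 3)) ℂ) = locMat (m + 3) i.1 0 (y α)⁻¹ (y α) 0) := by
  have hsq := zeta8Mat_mul_self (m := m) hy a hb
  let F (g : MVTGen (m + 1) k) : GL (Fin (m + 3)) ℂ :=
    ⟨zeta8Mat y a b g, zeta8Mat y a b g, hsq g, hsq g⟩
  have hrel : ∀ r ∈ mvtRels (m + 1) k, FreeGroup.lift F r = 1 :=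
    lift_eq_one_of_mem_mvtRels F (fun g => Units.ext (hsq g))
      (fun g h hgh => Units.ext (zeta8Mat_commute y a b g h hgh))
      (fun i j α hj => Units.ext
        (extendBlock_window_braid i j (by omega) hj (rhoBlock_braid_left (y α) (rhoBlock (y α)))))
      (fun i j α β hj _ => Units.ext
        (extendBlock_window_braid i j (by omega) hj (rhoBlock_braid_right (y β) (rhoBlock (y α)))))
      (fun i j α β hj _ => Units.ext
        (extendBlock_window_braid i j (by omega) hj (rhoBlock_braid_left (y α) (rhoBlock (y β)))))
      (fun i j α hj => Units.ext
        (extendBlock_window_braid i j (by omega) hj (rhoBlock_braid_left (y α) (sBlock a b))))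
  refine ⟨PresentedGroup.toGroup hrel, fun i => ?_, fun i α => ?_⟩ <;>
    refine (congrArg Units.val (PresentedGroup.toGroup.of hrel)).trans ?_ <;>
    exact (locMat_eq_extendBlock _ (by omega) _ _ _ _).symm
end

section
/- Fix n ≥ 3, k ≥ 1, nonzero y_0,…,y_{k−1}, z ∈ ℂ. Define n×n matrices B_i equal to the identity except in rows/columns i, i+1 where it is the block [[1, z],[0, −1]], and R_i^α equal to the identity except in rows/columns i, i+1 where it is [[0, 1/y_α],[y_α, 0]]. Then the assignment s_i ↦ B_i, ρ_i^α ↦ R_i^α satisfies all defining relations of M_kVT_n and hence defines a representation ζ_6 : M_kVT_n → GL_n(ℂ). -/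
/-!
Every generator matrix differs from the identity only in a `2 × 2` diagonal block, so
generators at distance at least two commute, and a relation between generators at `i` and
`i + 1` only has to be checked on the `3 × 3` block in rows and columns `i, i+1, i+2`.
There `Q = R_i^α R_{i+1}^α` sends `e_i, e_{i+1}` to `y_α e_{i+1}, y_α e_{i+2}`, so conjugation
by `Q` moves any `2 × 2` block from position `i` to position `i + 1`. With `X` running over
`B`, `R^α` and `R^β`, this gives the key relation, the braid relation and the mixed relations
(one of the latter in the form `X_i Q⁻¹ = Q⁻¹ X_{i+1}`, where `Q⁻¹ = R_{i+1}^α R_i^α`).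
-/

namespace Matrix

open Function Set

variable {ι κ R : Type*} [DecidableEq κ]

def IsIdOutside [Zero R] [One R] (s : Set κ) (M : Matrix κ κ R) : Prop :=
  ∀ p q, (p ∉ s ∨ q ∉ s) → M p q = (1 : Matrix κ κ R) p q

namespace IsIdOutside

variable {s t : Set κ} {M N : Matrix κ κ R}

theorem one [Zero R] [One R] : IsIdOutside s (1 : Matrix κ κ R) :=
  fun _ _ _ => rfl

theorem mono [Zero R] [One R] (hM : IsIdOutside s M) (hst : s ⊆ t) : IsIdOutside t M :=
  fun p q hpq => hM p q (hpq.imp (mt (@hst p)) (mt (@hst q)))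

theorem ext_of_submatrix [Zero R] [One R] {e : ι → κ} (hM : IsIdOutside (range e) M)
    (hN : IsIdOutside (range e) N) (h : M.submatrix e e = N.submatrix e e) : M = N := by
  ext p q
  by_cases hpq : p ∈ range e ∧ q ∈ range e
  · obtain ⟨⟨a, rfl⟩, ⟨b, rfl⟩⟩ := hpq
    exact congrFun₂ h a b
  · rw [not_and_or] at hpq
    rw [hM p q hpq, hN p q hpq]

variable [Fintype κ]

theorem mul [NonAssocSemiring R] (hM : IsIdOutside s M) (hN : IsIdOutside s N) :
    IsIdOutside s (M * N) := by
  rintro p q (hp | hq)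
  · have hrow : (M * N) p q = ((1 : Matrix κ κ R) * N) p q := by
      simp only [mul_apply, fun r => hM p r (.inl hp)]
    rw [hrow, Matrix.one_mul, hN p q (.inl hp)]
  · have hcol : (M * N) p q = (M * (1 : Matrix κ κ R)) p q := by
      simp only [mul_apply, fun r => hN r q (.inr hq)]
    rw [hcol, Matrix.mul_one, hM p q (.inr hq)]

theorem submatrix_mul [Fintype ι] [NonAssocSemiring R] {e : ι → κ} (he : Injective e)
    (hN : IsIdOutside (range e) N) (M : Matrix κ κ R) :
    (M * N).submatrix e e = M.submatrix e e * N.submatrix e e := by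
  ext a b
  simp only [submatrix_apply, mul_apply]
  refine (Fintype.sum_of_injective e he _ _ (fun r hr => ?_) fun c => rfl).symm
  rw [hN r (e b) (.inl hr), one_apply_ne (fun h => hr ⟨b, h.symm⟩), mul_zero]

theorem mul_mul_eq_mul_mul_of_submatrix [Fintype ι] [NonAssocSemiring R] {e : ι → κ}
    (he : Injective e) {M₁ M₂ M₃ N₁ N₂ N₃ : Matrix κ κ R} (h₁ : IsIdOutside (range e) M₁)
    (h₂ : IsIdOutside (range e) M₂) (h₃ : IsIdOutside (range e) M₃)
    (h₄ : IsIdOutside (range e) N₁) (h₅ : IsIdOutside (range e) N₂)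
    (h₆ : IsIdOutside (range e) N₃)
    (h : M₁.submatrix e e * M₂.submatrix e e * M₃.submatrix e e =
      N₁.submatrix e e * N₂.submatrix e e * N₃.submatrix e e) :
    M₁ * M₂ * M₃ = N₁ * N₂ * N₃ := by
  refine ((h₁.mul h₂).mul h₃).ext_of_submatrix ((h₄.mul h₅).mul h₆) ?_
  rwa [h₃.submatrix_mul he, h₂.submatrix_mul he, h₆.submatrix_mul he, h₅.submatrix_mul he]

theorem sub_one_mul_sub_one_eq_zero [Ring R] (hM : IsIdOutside s M) (hN : IsIdOutside t N)
    (hst : Disjoint s t) : (M - 1) * (N - 1) = 0 := by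
  ext p q
  rw [mul_apply, zero_apply]
  refine Finset.sum_eq_zero fun r _ => ?_
  simp only [sub_apply]
  by_cases hr : r ∈ s
  · rw [hN r q (.inl (hst.notMem_of_mem_left hr)), sub_self, mul_zero]
  · rw [hM p r (.inr hr), sub_self, zero_mul]

theorem commute [Ring R] (hM : IsIdOutside s M) (hN : IsIdOutside t N) (hst : Disjoint s t) :
    Commute M N := by
  have h : Commute (M - 1) (N - 1) :=
    (hM.sub_one_mul_sub_one_eq_zero hN hst).trans
      (hN.sub_one_mul_sub_one_eq_zero hM hst.symm).symm
  simpa using (h.add_right (Commute.one_right _)).add_left (Commute.one_left _)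

end IsIdOutside

end Matrix

def Fin.window_s7 (n i w : ℕ) (h : i + w ≤ n) : Fin w → Fin n := fun t => ⟨i + t, by omega⟩

theorem Fin.window_injective {n i w : ℕ} (h : i + w ≤ n) : Function.Injective (window_s7 n i w h) :=
  fun s t hst => Fin.ext (by simpa [window_s7] using hst)

section locMat

open Matrix Set

variable {n i : ℕ}

theorem locMat_isIdOutside (a b c d : ℂ) :
    IsIdOutside {p : Fin n | p.1 = i ∨ p.1 = i + 1} (locMat n i a b c d) := by
  intro p q (hpq : ¬(p.1 = i ∨ p.1 = i + 1) ∨ ¬(q.1 = i ∨ q.1 = i + 1))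
  simp only [locMat, of_apply, one_apply, Fin.ext_iff]
  split_ifs <;> first | rfl | omega

theorem locMat_isIdOutside_window {w j : ℕ} (h : i + w ≤ n) (hij : i ≤ j)
    (hjw : j + 2 ≤ i + w) (a b c d : ℂ) :
    IsIdOutside (range (Fin.window_s7 n i w h)) (locMat n j a b c d) :=
  (locMat_isIdOutside a b c d).mono fun p (hp : p.1 = j ∨ p.1 = j + 1) =>
    ⟨⟨p.1 - i, by omega⟩, Fin.ext (by simp only [Fin.window_s7]; omega)⟩

theorem locMat_submatrix_window_two (h : i + 2 ≤ n) (a b c d : ℂ) :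
    (locMat n i a b c d).submatrix (Fin.window_s7 n i 2 h) (Fin.window_s7 n i 2 h) =
      !![a, b; c, d] := by
  ext s t
  fin_cases s <;> fin_cases t <;> simp [locMat, Fin.window_s7]

theorem locMat_submatrix_window_three (h : i + 3 ≤ n) (a b c d : ℂ) :
    (locMat n i a b c d).submatrix (Fin.window_s7 n i 3 h) (Fin.window_s7 n i 3 h) =
      !![a, b, 0; c, d, 0; 0, 0, 1] := by
  ext s t
  fin_cases s <;> fin_cases t <;> simp [locMat, Fin.window_s7]

theorem locMat_succ_submatrix_window_three (h : i + 3 ≤ n) (a b c d : ℂ) :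
    (locMat n (i + 1) a b c d).submatrix (Fin.window_s7 n i 3 h) (Fin.window_s7 n i 3 h) =
      !![1, 0, 0; 0, a, b; 0, c, d] := by
  ext s t
  fin_cases s <;> fin_cases t <;> simp [locMat, Fin.window_s7, add_assoc]

theorem locMat_mul_self (h : i + 2 ≤ n) {a b c d : ℂ}
    (hA : !![a, b; c, d] * !![a, b; c, d] = 1) :
    locMat n i a b c d * locMat n i a b c d = 1 := by
  have hL := locMat_isIdOutside_window h le_rfl le_rfl a b c d
  refine (hL.mul hL).ext_of_submatrix IsIdOutside.one ?_
  rw [hL.submatrix_mul (Fin.window_injective h), submatrix_one _ (Fin.window_injective h),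
    locMat_submatrix_window_two, hA]

theorem locMat_commute {j : ℕ} (hij : i + 2 ≤ j ∨ j + 2 ≤ i) (a b c d a' b' c' d' : ℂ) :
    Commute (locMat n i a b c d) (locMat n j a' b' c' d') :=
  (locMat_isIdOutside a b c d).commute (locMat_isIdOutside a' b' c' d') <|
    disjoint_left.2 fun p (hi : p.1 = i ∨ p.1 = i + 1) (hj : p.1 = j ∨ p.1 = j + 1) => by omega

noncomputable def rhoMat (n i : ℕ) (u : ℂ) : Matrix (Fin n) (Fin n) ℂ := locMat n i 0 u⁻¹ u 0

theorem rhoMat_mul_rhoMat_mul_locMat (h : i + 3 ≤ n) (u a b c d : ℂ) :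
    rhoMat n i u * rhoMat n (i + 1) u * locMat n i a b c d =
      locMat n (i + 1) a b c d * rhoMat n i u * rhoMat n (i + 1) u := by
  have hL := locMat_isIdOutside_window (j := i) h le_rfl (by omega)
  have hR := locMat_isIdOutside_window (j := i + 1) h (by omega) (by omega)
  refine IsIdOutside.mul_mul_eq_mul_mul_of_submatrix (Fin.window_injective h)
    (hL _ _ _ _) (hR _ _ _ _) (hL _ _ _ _) (hR _ _ _ _) (hL _ _ _ _) (hR _ _ _ _) ?_
  simp only [rhoMat, locMat_submatrix_window_three, locMat_succ_submatrix_window_three]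
  simp [mul_comm]

theorem locMat_mul_rhoMat_mul_rhoMat (h : i + 3 ≤ n) (u a b c d : ℂ) :
    locMat n i a b c d * rhoMat n (i + 1) u * rhoMat n i u =
      rhoMat n (i + 1) u * rhoMat n i u * locMat n (i + 1) a b c d := by
  have hL := locMat_isIdOutside_window (j := i) h le_rfl (by omega)
  have hR := locMat_isIdOutside_window (j := i + 1) h (by omega) (by omega)
  refine IsIdOutside.mul_mul_eq_mul_mul_of_submatrix (Fin.window_injective h)
    (hL _ _ _ _) (hR _ _ _ _) (hL _ _ _ _) (hR _ _ _ _) (hL _ _ _ _) (hR _ _ _ _) ?_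
  simp only [rhoMat, locMat_submatrix_window_three, locMat_succ_submatrix_window_three]
  simp [mul_comm]

end locMat

namespace FreeGroup

variable {α G : Type*} [Group G] {f : α → G}

theorem lift_commutator_eq_one {a b : α} (h : Commute (f a) (f b)) :
    lift f (of a * of b * (of a)⁻¹ * (of b)⁻¹) = 1 := by
  simp [h.eq]

theorem lift_mul_mul_mul_inv_eq_one {a b c a' b' c' : α}
    (h : f a * f b * f c = f a' * f b' * f c') :
    lift f (of a * of b * of c * (of a' * of b' * of c')⁻¹) = 1 := by
  simp [h]

end FreeGroup

section zeta6

variable {m k : ℕ} (y : Fin (k + 1) → ℂ) (z : ℂ)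

noncomputable def zeta6Mat : MVTGen m k → Matrix (Fin (m + 2)) (Fin (m + 2)) ℂ
  | .s i => locMat (m + 2) i 1 z 0 (-1)
  | .rho i α => rhoMat (m + 2) i (y α)

variable {y}

theorem zeta6Mat_mul_self (hy : ∀ α, y α ≠ 0) (g : MVTGen m k) :
    zeta6Mat y z g * zeta6Mat y z g = 1 := by
  cases g with
  | s i => exact locMat_mul_self (by omega) (by simp [Matrix.one_fin_two])
  | rho i α => exact locMat_mul_self (by omega) (by simp [Matrix.one_fin_two, hy α])

noncomputable def zeta6Gen (hy : ∀ α, y α ≠ 0) (g : MVTGen m k) : GL (Fin (m + 2)) ℂ :=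
  ⟨zeta6Mat y z g, zeta6Mat y z g, zeta6Mat_mul_self z hy g, zeta6Mat_mul_self z hy g⟩

theorem lift_zeta6Gen_of_mem_mvtRels (hy : ∀ α, y α ≠ 0) :
    ∀ r ∈ mvtRels m k, FreeGroup.lift (zeta6Gen z hy) r = 1 := by
  rintro r (⟨i, rfl⟩ | ⟨i, j, hij, rfl⟩ | ⟨i, α, rfl⟩ | ⟨i, j, α, β, hij, rfl⟩ |
    ⟨i, j, α, hij, rfl⟩ | ⟨i, j, α, hj, rfl⟩ | ⟨i, j, α, β, hj, -, rfl⟩ |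
    ⟨i, j, α, β, hj, -, rfl⟩ | ⟨i, j, α, hj, rfl⟩)
  · simpa using Units.ext (zeta6Mat_mul_self z hy _)
  · exact FreeGroup.lift_commutator_eq_one (Commute.units_val_iff.1 (locMat_commute hij ..))
  · simpa using Units.ext (zeta6Mat_mul_self z hy _)
  · exact FreeGroup.lift_commutator_eq_one (Commute.units_val_iff.1 (locMat_commute hij ..))
  · exact FreeGroup.lift_commutator_eq_one (Commute.units_val_iff.1 (locMat_commute hij ..))
  all_goals
    refine FreeGroup.lift_mul_mul_mul_inv_eq_one (Units.ext ?_)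
    simp only [Units.val_mul, zeta6Gen, zeta6Mat, hj]
  · exact rhoMat_mul_rhoMat_mul_locMat (by omega) ..
  · exact locMat_mul_rhoMat_mul_rhoMat (by omega) ..
  · exact rhoMat_mul_rhoMat_mul_locMat (by omega) ..
  · exact rhoMat_mul_rhoMat_mul_locMat (by omega) ..

noncomputable def zeta6 (hy : ∀ α, y α ≠ 0) : MVT m k →* GL (Fin (m + 2)) ℂ :=
  PresentedGroup.toGroup (lift_zeta6Gen_of_mem_mvtRels z hy)

theorem coe_zeta6_gen (hy : ∀ α, y α ≠ 0) (g : MVTGen m k) :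
    (zeta6 z hy (MVT.gen g) : Matrix (Fin (m + 2)) (Fin (m + 2)) ℂ) = zeta6Mat y z g :=
  congrArg Units.val (PresentedGroup.toGroup.of (lift_zeta6Gen_of_mem_mvtRels z hy))

end zeta6

theorem mvt_rep_zeta6_general (m k : ℕ) (y : Fin (k + 1) → ℂ) (hy : ∀ α, y α ≠ 0)
    (z : ℂ) :
    ∃ ζ : MVT (m + 1) k →* GL (Fin (m + 3)) ℂ,
      (∀ i : Fin (m + 2),
        ((ζ (MVT.gen (MVTGen.s i)) : GL (Fin (m + 3)) ℂ) :
          Matrix (Fin (m + 3)) (Fin (m + 3)) ℂ) = locMat (m + 3) i.1 1 z 0 (-1)) ∧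
      (∀ (i : Fin (m + 2)) (α : Fin (k + 1)),
        ((ζ (MVT.gen (MVTGen.rho i α)) : GL (Fin (m + 3)) ℂ) :
          Matrix (Fin (m + 3)) (Fin (m + 3)) ℂ) = locMat (m + 3) i.1 0 (y α)⁻¹ (y α) 0) :=
  ⟨zeta6 z hy, fun i => coe_zeta6_gen z hy (.s i), fun i α => coe_zeta6_gen z hy (.rho i α)⟩

/-- The assignment `sᵢ ↦` (identity except block `[[1, z],[0, -1]]` at rows/columns
`i, i+1`) and `ρᵢ^α ↦` (identity except block `[[0, 1/y_α],[y_α, 0]]`) satisfies all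
defining relations of `M_{k+1}VT_{m+3}` and hence defines a representation
`ζ₆ : M_{k+1}VT_{m+3} → GL_{m+3}(ℂ)`. -/
theorem mvt_rep_zeta6 (m k : ℕ) (y : Fin (k + 1) → ℂ) (hy : ∀ α, y α ≠ 0)
    (z : ℂ) (hz : z ≠ 0) :
    ∃ ζ : MVT (m + 1) k →* GL (Fin (m + 3)) ℂ,
      (∀ i : Fin (m + 2),
        ((ζ (MVT.gen (MVTGen.s i)) : GL (Fin (m + 3)) ℂ) :
          Matrix (Fin (m + 3)) (Fin (m + 3)) ℂ) = locMat (m + 3) i.1 1 z 0 (-1)) ∧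
      (∀ (i : Fin (m + 2)) (α : Fin (k + 1)),
        ((ζ (MVT.gen (MVTGen.rho i α)) : GL (Fin (m + 3)) ℂ) :
          Matrix (Fin (m + 3)) (Fin (m + 3)) ℂ) = locMat (m + 3) i.1 0 (y α)⁻¹ (y α) 0) :=
  mvt_rep_zeta6_general m k y hy z
end

section
/- Let n ≥ 3, k ≥ 1, y_0,…,y_{k−1} ∈ ℂ*, z ∈ ℂ*, and let ζ_6 be the 2-local representation of M_kVT_n with s_i ↦ block [[1, z],[0, −1]] and ρ_i^α ↦ block [[0, 1/y_α],[y_α, 0]] at positions i, i+1. Then for all 1 ≤ i ≤ n−2 and 0 ≤ α ≤ k−1, the matrix (ζ_6(s_i) ζ_6(ρ_{i+1}^α))^4 equals the identity matrix I_n; equivalently, the element (s_i ρ_{i+1}^α)^4 lies in the kernel of ζ_6. -/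
namespace Function.Embedding

variable {m n : Type*} [Fintype m] [DecidableEq n]

def sumComplRangeEquiv (ι : m ↪ n) : m ⊕ ↥(Set.range ι)ᶜ ≃ n :=
  (Equiv.sumCongr ι.toEquivRange (Equiv.refl _)).trans (Equiv.Set.sumCompl _)

theorem sumComplRangeEquiv_symm_apply_self (ι : m ↪ n) (k : m) :
    ι.sumComplRangeEquiv.symm (ι k) = Sum.inl k := by
  rw [Equiv.symm_apply_eq]; rfl

theorem sumComplRangeEquiv_symm_apply_of_notMem (ι : m ↪ n) {p : n} (hp : p ∉ Set.range ι) :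
    ι.sumComplRangeEquiv.symm p = Sum.inr ⟨p, hp⟩ := by
  rw [Equiv.symm_apply_eq]; rfl

end Function.Embedding

namespace Matrix

open Function.Embedding

variable {m n : Type*} [Fintype m] [DecidableEq m] [Fintype n] [DecidableEq n]
  {R : Type*} [Semiring R]

/-- Places `M` on the rows and columns `ι '' m` and fills the rest with the identity. -/
def extendByOne (ι : m ↪ n) : Matrix m m R →* Matrix n n R where
  toFun M := (fromBlocks M 0 0 1).submatrix ι.sumComplRangeEquiv.symm ι.sumComplRangeEquiv.symm
  map_one' := by simp [fromBlocks_one]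
  map_mul' M N := by
    rw [submatrix_mul_equiv, fromBlocks_multiply]
    simp

theorem extendByOne_apply_apply (ι : m ↪ n) (M : Matrix m m R) (k l : m) :
    extendByOne ι M (ι k) (ι l) = M k l := by
  simp [extendByOne, sumComplRangeEquiv_symm_apply_self]

theorem extendByOne_apply_of_notMem (ι : m ↪ n) (M : Matrix m m R) {p q : n}
    (h : p ∉ Set.range ι ∨ q ∉ Set.range ι) : extendByOne ι M p q = (1 : Matrix n n R) p q := by
  by_cases hp : p ∈ Set.range ι <;> by_cases hq : q ∈ Set.range ι
  · tauto
  · obtain ⟨k, rfl⟩ := hp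
    simp [extendByOne, sumComplRangeEquiv_symm_apply_self,
      sumComplRangeEquiv_symm_apply_of_notMem ι hq, one_apply_ne (fun h => hq ⟨k, h⟩)]
  · obtain ⟨l, rfl⟩ := hq
    simp [extendByOne, sumComplRangeEquiv_symm_apply_self,
      sumComplRangeEquiv_symm_apply_of_notMem ι hp, one_apply_ne (fun h => hp ⟨l, h.symm⟩)]
  · simp [extendByOne, sumComplRangeEquiv_symm_apply_of_notMem ι hp,
      sumComplRangeEquiv_symm_apply_of_notMem ι hq, one_apply]

end Matrix

namespace Fin

def shiftEmb {m n : ℕ} (i : ℕ) (h : i + m ≤ n) : Fin m ↪ Fin n :=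
  (natAddEmb i).trans (castLEEmb h)

@[simp]
theorem val_shiftEmb {m n i : ℕ} (h : i + m ≤ n) (k : Fin m) : (shiftEmb i h k).val = i + k :=
  rfl

theorem mem_range_shiftEmb {m n i : ℕ} (h : i + m ≤ n) {p : Fin n} :
    p ∈ Set.range (shiftEmb i h) ↔ i ≤ p.val ∧ p.val < i + m := by
  constructor
  · rintro ⟨k, rfl⟩
    simp
  · rintro ⟨hip, hpm⟩
    exact ⟨⟨p - i, by omega⟩, Fin.ext (by simp; omega)⟩

end Fin

theorem locMat_add_eq_extendByOne {m n i j : ℕ} (h : i + m ≤ n) (hj : j + 1 < m) (a b c d : ℂ) :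
    locMat n (i + j) a b c d = Matrix.extendByOne (Fin.shiftEmb i h) (locMat m j a b c d) := by
  ext p q
  by_cases hpq : p ∈ Set.range (Fin.shiftEmb i h) ∧ q ∈ Set.range (Fin.shiftEmb i h)
  · obtain ⟨⟨k, rfl⟩, ⟨l, rfl⟩⟩ := hpq
    simp [Matrix.extendByOne_apply_apply, locMat, Fin.ext_iff, add_assoc]
  · rw [Matrix.extendByOne_apply_of_notMem _ _ (not_and_or.mp hpq), Matrix.one_apply]
    simp only [Fin.mem_range_shiftEmb] at hpq
    simp only [locMat, Matrix.of_apply]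
    split_ifs <;> first | rfl | omega

theorem locMat_three_zero (a b c d : ℂ) : locMat 3 0 a b c d = !![a, b, 0; c, d, 0; 0, 0, 1] := by
  ext p q
  fin_cases p <;> fin_cases q <;> simp [locMat]

theorem locMat_three_one (a b c d : ℂ) : locMat 3 1 a b c d = !![1, 0, 0; 0, a, b; 0, c, d] := by
  ext p q
  fin_cases p <;> fin_cases q <;> simp [locMat]

theorem sq_reflection_mul_swap {K : Type*} [Field K] {y : K} (hy : y ≠ 0) (z : K) :
    (!![1, z, 0; 0, -1, 0; 0, 0, 1] * !![1, 0, 0; 0, 0, y⁻¹; 0, y, 0]) ^ 2 =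
      !![1, z, z * y⁻¹; 0, -1, 0; 0, 0, -1] := by
  simp [sq, hy]

theorem sq_upper_fin_three_eq_one {R : Type*} [CommRing R] (z w : R) :
    !![1, z, w; 0, -1, 0; 0, 0, -1] ^ 2 = 1 := by
  simp [sq, Matrix.one_fin_three]

theorem zeta6_kernel_element_general (n : ℕ) (y z : ℂ) (hy : y ≠ 0)
    (i : ℕ) (hi : i + 2 < n) :
    (locMat n i 1 z 0 (-1) * locMat n (i + 1) 0 y⁻¹ y 0) ^ 4 = 1 := by
  have h : i + 3 ≤ n := hi
  have hs : locMat n i 1 z 0 (-1) =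
      Matrix.extendByOne (Fin.shiftEmb i h) (locMat 3 0 1 z 0 (-1)) :=
    locMat_add_eq_extendByOne (j := 0) h (by norm_num) ..
  have hρ : locMat n (i + 1) 0 y⁻¹ y 0 =
      Matrix.extendByOne (Fin.shiftEmb i h) (locMat 3 1 0 y⁻¹ y 0) :=
    locMat_add_eq_extendByOne (j := 1) h (by norm_num) ..
  rw [hs, hρ, ← map_mul, ← map_pow, locMat_three_zero, locMat_three_one,
    show 4 = 2 * 2 from rfl, pow_mul, sq_reflection_mul_swap hy, sq_upper_fin_three_eq_one,
    map_one]

/-- For the 2-local representation `ζ₆` (with `sᵢ ↦` block `[[1, z],[0, -1]]` and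
`ρᵢ^α ↦` block `[[0, 1/y_α],[y_α, 0]]`), the matrix `(ζ₆(sᵢ) ζ₆(ρ_{i+1}^α))⁴` equals the
identity, i.e. `(sᵢ ρ_{i+1}^α)⁴` lies in the kernel of `ζ₆`. -/
theorem zeta6_kernel_element (n : ℕ) (hn : 3 ≤ n) (y z : ℂ) (hy : y ≠ 0) (hz : z ≠ 0)
    (i : ℕ) (hi : i + 2 < n) :
    (locMat n i 1 z 0 (-1) * locMat n (i + 1) 0 y⁻¹ y 0) ^ 4 = 1 :=
  zeta6_kernel_element_general n y z hy i hi
end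

section
/- Let n ≥ 3, k ≥ 1, y_0,…,y_{k−1} ∈ ℂ*, b ∈ ℂ*, and let ζ_8 be the 2-local representation of M_kVT_n with s_i ↦ block [[−a, −(a²−1)/b],[b, a]] and ρ_i^α ↦ block [[0, 1/y_α],[y_α, 0]] at positions i, i+1, where a = 0. Then for all 1 ≤ i ≤ n−2 and 0 ≤ α ≤ k−1, the matrix (ζ_8(s_i) ζ_8(ρ_{i+1}^α))^3 equals the identity I_n. -/
open Equiv Finset

section MonomialMatrix

variable {ι R : Type*} [DecidableEq ι] [CommSemiring R]

def monomialMatrix (c : ι → R) (σ : Perm ι) : Matrix ι ι R :=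
  Matrix.of fun p q => if q = σ p then c p else 0

theorem monomialMatrix_one : monomialMatrix (fun _ => (1 : R)) 1 = (1 : Matrix ι ι R) := by
  ext p q
  simp [monomialMatrix, Matrix.one_apply, eq_comm]

variable [Fintype ι]

theorem monomialMatrix_mul (c d : ι → R) (σ τ : Perm ι) :
    monomialMatrix c σ * monomialMatrix d τ =
      monomialMatrix (fun p => c p * d (σ p)) (τ * σ) := by
  ext p q
  simp only [monomialMatrix, Matrix.of_apply, Matrix.mul_apply, ite_mul, zero_mul]
  rw [sum_eq_single (σ p) (by simp_all) (by simp)]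
  simp only [if_pos, mul_ite, mul_zero]
  -- the two sides differ only in the `Decidable` instance of `q = (τ * σ) p`
  rfl

theorem monomialMatrix_pow (c : ι → R) (σ : Perm ι) (k : ℕ) :
    monomialMatrix c σ ^ k =
      monomialMatrix (fun p => ∏ j ∈ range k, c ((σ ^ j) p)) (σ ^ k) := by
  induction k with
  | zero => simp [monomialMatrix_one]
  | succ k ih =>
    rw [pow_succ, ih, monomialMatrix_mul, pow_succ']
    simp only [prod_range_succ]

theorem monomialMatrix_pow_eq_one {c : ι → R} {σ : Perm ι} {k : ℕ} (hσ : σ ^ k = 1)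
    (hc : ∀ p, ∏ j ∈ range k, c ((σ ^ j) p) = 1) : monomialMatrix c σ ^ k = 1 := by
  rw [monomialMatrix_pow, hσ, ← monomialMatrix_one]
  simp_rw [hc]

theorem monomialMatrix_swap_mul_swap_pow_three {p q r : ι} (hpq : p ≠ q) (hpr : p ≠ r)
    (hqr : q ≠ r) {u v u' v' : R} (h : u * v * u' * v' = 1) :
    (monomialMatrix (Function.update (Function.update 1 p u) q v) (swap p q) *
      monomialMatrix (Function.update (Function.update 1 q u') r v') (swap q r)) ^ 3 = 1 := by
  rw [monomialMatrix_mul]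
  apply monomialMatrix_pow_eq_one
  · rw [swap_comm p q, ← (Perm.isThreeCycle_swap_mul_swap_same hqr hpq.symm hpr.symm).orderOf]
    exact pow_orderOf_eq_one _
  · intro x
    simp only [prod_range_succ, prod_range_zero, one_mul, Perm.coe_pow,
      Function.iterate_zero_apply, Function.iterate_succ_apply', Perm.mul_apply]
    by_cases hx : x = p ∨ x = q ∨ x = r
    · rcases hx with rfl | rfl | rfl <;>
        simp [swap_apply_of_ne_of_ne, hpq, hpr, hqr, hpr.symm, hqr.symm] <;>
        rw [← h] <;> ring
    · push Not at hx
      simp [swap_apply_of_ne_of_ne, hx.1, hx.2.1, hx.2.2]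

end MonomialMatrix

theorem locMat_eq_monomialMatrix_swap {n i : ℕ} (h : i + 1 < n) (u v : ℂ) :
    locMat n i 0 u v 0 =
      monomialMatrix (Function.update (Function.update 1 ⟨i, by omega⟩ u) ⟨i + 1, h⟩ v)
        (swap ⟨i, by omega⟩ ⟨i + 1, h⟩) := by
  ext r s
  simp only [locMat, monomialMatrix, Matrix.of_apply, Function.update_apply, Pi.one_apply,
    swap_apply_def, Fin.ext_iff, apply_ite Fin.val]
  split_ifs <;> first | rfl | omega

theorem zeta8_a_zero_kernel_element_general (n : ℕ) (y b a : ℂ) (hy : y ≠ 0)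
    (hb : b ≠ 0) (ha : a = 0) (i : ℕ) (hi : i + 2 < n) :
    (locMat n i (-a) (-((a ^ 2 - 1) / b)) b a * locMat n (i + 1) 0 y⁻¹ y 0) ^ 3 = 1 := by
  subst ha
  rw [show -(((0 : ℂ) ^ 2 - 1) / b) = b⁻¹ by ring, neg_zero,
    locMat_eq_monomialMatrix_swap (by omega), locMat_eq_monomialMatrix_swap hi]
  refine monomialMatrix_swap_mul_swap_pow_three (Fin.ne_of_lt (Fin.mk_lt_mk.2 (by omega)))
    (Fin.ne_of_lt (Fin.mk_lt_mk.2 (by omega))) (Fin.ne_of_lt (Fin.mk_lt_mk.2 (by omega))) ?_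
  rw [inv_mul_cancel₀ hb, one_mul, inv_mul_cancel₀ hy]

/-- For the 2-local representation `ζ₈` with `a = 0` (so `sᵢ ↦` block
`[[-a, -(a²-1)/b],[b, a]] = [[0, 1/b],[b, 0]]` and `ρᵢ^α ↦` block `[[0, 1/y_α],[y_α, 0]]`),
the matrix `(ζ₈(sᵢ) ζ₈(ρ_{i+1}^α))³` equals the identity. -/
theorem zeta8_a_zero_kernel_element (n : ℕ) (hn : 3 ≤ n) (y b a : ℂ) (hy : y ≠ 0)
    (hb : b ≠ 0) (ha : a = 0) (i : ℕ) (hi : i + 2 < n) :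
    (locMat n i (-a) (-((a ^ 2 - 1) / b)) b a * locMat n (i + 1) 0 y⁻¹ y 0) ^ 3 = 1 :=
  zeta8_a_zero_kernel_element_general n y b a hy hb ha i hi
end

section
/- Let n ≥ 3, k ≥ 1 and suppose y_α = y for all 0 ≤ α ≤ k−1, with y ∈ ℂ*. Let ζ_2 be the 2-local representation of M_kVT_n with s_i ↦ I_n and ρ_i^α ↦ the identity-except-block matrix with block [[0, 1/y],[y, 0]] at rows/columns i, i+1. Then the one-dimensional subspace of ℂ^n spanned by the vector v = (1, y, y², …, y^{n−1})ᵀ is invariant under ζ_2(s_i) and ζ_2(ρ_i^α) for all i, α; hence ζ_2 is reducible. -/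
open Matrix Module

theorem locMat_mulVec_apply {n i : ℕ} (hi : i + 1 < n) (a b c d : ℂ) (v : Fin n → ℂ)
    (p : Fin n) :
    (locMat n i a b c d *ᵥ v) p =
      if p.1 = i then a * v ⟨i, by omega⟩ + b * v ⟨i + 1, hi⟩
      else if p.1 = i + 1 then c * v ⟨i, by omega⟩ + d * v ⟨i + 1, hi⟩
      else v p := by
  have hne : (⟨i, by omega⟩ : Fin n) ≠ ⟨i + 1, hi⟩ := by simp
  simp only [mulVec, dotProduct, locMat, of_apply]
  split_ifs with hp hp'
  · rw [Finset.sum_eq_add _ _ hne] <;> simp +contextual [hp, Fin.ext_iff]; omega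
  · rw [Finset.sum_eq_add _ _ hne] <;> simp +contextual [hp', Fin.ext_iff]; omega
  · rw [Finset.sum_eq_single p] <;> simp +contextual [hp, hp', Fin.ext_iff]; omega

/-- In the paper's normalisation this is the statement that, after conjugating by
`diag(y^{1-n}, …, y^{-1}, 1)`, the all-ones vector is fixed. -/
theorem locMat_swap_mulVec_powers {n i : ℕ} (hi : i + 1 < n) {y : ℂ} (hy : y ≠ 0) :
    locMat n i 0 y⁻¹ y 0 *ᵥ (fun p : Fin n => y ^ p.1) = fun p : Fin n => y ^ p.1 := by
  funext p
  rw [locMat_mulVec_apply hi]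
  split_ifs with hp hp'
  · simp [hp, pow_succ', inv_mul_cancel_left₀ hy]
  · rw [hp', pow_succ]
    ring
  · rfl

theorem mulVec_mem_span_singleton_of_mulVec_eq_smul {R m : Type*} [CommSemiring R] [Fintype m]
    {A : Matrix m m R} {v : m → R} {c : R} (hv : A *ᵥ v = c • v) {u : m → R} (hu : u ∈ R ∙ v) :
    A *ᵥ u ∈ R ∙ v := by
  obtain ⟨t, rfl⟩ := Submodule.mem_span_singleton.mp hu
  rw [mulVec_smul, hv, smul_smul]
  exact Submodule.smul_mem _ _ (Submodule.mem_span_singleton_self v)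

theorem span_singleton_ne_top_of_one_lt_finrank {K V : Type*} [DivisionRing K] [AddCommGroup V]
    [Module K V] [FiniteDimensional K V] (hV : 1 < finrank K V) (v : V) : K ∙ v ≠ ⊤ := by
  intro h
  have hle := finrank_span_le_card (R := K) ({v} : Set V)
  rw [h, finrank_top, Set.toFinset_singleton, Finset.card_singleton] at hle
  omega

theorem zeta2_equal_params_reducible_general (n : ℕ) (hn : 3 ≤ n)
    (y : ℂ) (hy : y ≠ 0) :
    (∀ u ∈ Submodule.span ℂ {fun p : Fin n => y ^ p.1},
      (1 : Matrix (Fin n) (Fin n) ℂ).mulVec u ∈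
        Submodule.span ℂ {fun p : Fin n => y ^ p.1}) ∧
    (∀ i : ℕ, i + 1 < n →
      ∀ u ∈ Submodule.span ℂ {fun p : Fin n => y ^ p.1},
        (locMat n i 0 y⁻¹ y 0).mulVec u ∈
          Submodule.span ℂ {fun p : Fin n => y ^ p.1}) ∧
    Submodule.span ℂ {fun p : Fin n => y ^ p.1} ≠ ⊥ ∧
    Submodule.span ℂ {fun p : Fin n => y ^ p.1} ≠ ⊤ := by
  refine ⟨fun u hu => by rwa [one_mulVec], fun i hi u hu => ?_, ?_, ?_⟩
  · refine mulVec_mem_span_singleton_of_mulVec_eq_smul (c := 1) ?_ hu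
    rw [one_smul, locMat_swap_mulVec_powers hi hy]
  · rw [Ne, Submodule.span_singleton_eq_bot, funext_iff, not_forall]
    exact ⟨⟨0, by omega⟩, by simp⟩
  · exact span_singleton_ne_top_of_one_lt_finrank (by simp; omega) _

/-- If all `y_α` equal a common value `y ≠ 0`, then the line spanned by
`v = (1, y, y², …, y^{n-1})ᵀ` is invariant under all the matrices `ζ₂(sᵢ) = Iₙ` and
`ζ₂(ρᵢ^α)`; hence `ζ₂` is reducible. -/
theorem zeta2_equal_params_reducible (n : ℕ) (hn : 3 ≤ n) (k : ℕ) (hk : 1 ≤ k)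
    (y : ℂ) (hy : y ≠ 0) :
    (∀ u ∈ Submodule.span ℂ {fun p : Fin n => y ^ p.1},
      (1 : Matrix (Fin n) (Fin n) ℂ).mulVec u ∈
        Submodule.span ℂ {fun p : Fin n => y ^ p.1}) ∧
    (∀ i : ℕ, i + 1 < n →
      ∀ u ∈ Submodule.span ℂ {fun p : Fin n => y ^ p.1},
        (locMat n i 0 y⁻¹ y 0).mulVec u ∈
          Submodule.span ℂ {fun p : Fin n => y ^ p.1}) ∧
    Submodule.span ℂ {fun p : Fin n => y ^ p.1} ≠ ⊥ ∧
    Submodule.span ℂ {fun p : Fin n => y ^ p.1} ≠ ⊤ :=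
  zeta2_equal_params_reducible_general n hn y hy
end

section
/- Let y_0, y_1 ∈ ℂ* with y_0 ≠ y_1. Consider the six 3×3 matrices L12 = [[0, 1/y_0, 0],[y_0, 0, 0],[0,0,1]], L23 = [[1,0,0],[0,0,1/y_0],[0,y_0,0]], L13 = [[0,0,1/y_0²],[0,1,0],[y_0²,0,0]], M12 = diag(y_1/y_0, y_0/y_1, 1), M23 = diag(1, y_1/y_0, y_0/y_1), M13 = diag(y_1/y_0, 1, y_0/y_1). Then the only subspaces of ℂ³ invariant under all six matrices are 0 and ℂ³ (i.e., this collection of matrices acts irreducibly). -/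
/-!
`M12 - M13` is diagonal with the distinct entries `0, c, -c`, where `c = y0 / y1 - 1 ≠ 0`.
By Lagrange interpolation every coordinate projection is a polynomial in it, so it lies in the
algebra of matrices preserving `U`; hence `U` is spanned by the coordinate vectors it contains.
The off-diagonal entries of `L12` and `L23` carry `e₁` to multiples of `e₀` and `e₂` and back,
so `U` contains either none or all of the coordinate vectors.
-/

open Matrix

namespace Submodule

variable {R ι : Type*} [CommSemiring R] [Fintype ι] [DecidableEq ι]

def matrixStabilizer (U : Submodule R (ι → R)) : Subalgebra R (Matrix ι ι R) where
  carrier := {A | ∀ u ∈ U, A *ᵥ u ∈ U}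
  mul_mem' {A B} hA hB u hu := by
    rw [← mulVec_mulVec]
    exact hA _ (hB u hu)
  add_mem' {A B} hA hB u hu := by
    rw [add_mulVec]
    exact U.add_mem (hA u hu) (hB u hu)
  algebraMap_mem' c u hu := by
    rw [Algebra.algebraMap_eq_smul_one, smul_mulVec, one_mulVec]
    exact U.smul_mem c hu

theorem mem_matrixStabilizer {U : Submodule R (ι → R)} {A : Matrix ι ι R} :
    A ∈ U.matrixStabilizer ↔ ∀ u ∈ U, A *ᵥ u ∈ U :=
  Iff.rfl

end Submodule

theorem Matrix.diagonal_single_one_mem_of_injective {K ι : Type*} [Field K] [Fintype ι]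
    [DecidableEq ι] {S : Subalgebra K (Matrix ι ι K)} {d : ι → K}
    (hd : diagonal d ∈ S) (hinj : Function.Injective d) (i : ι) :
    diagonal (Pi.single i 1) ∈ S := by
  have hp : Polynomial.aeval (diagonal d) (Lagrange.basis Finset.univ d i) ∈ S :=
    Algebra.adjoin_le (Set.singleton_subset_iff.2 hd) (Polynomial.aeval_mem_adjoin_singleton K _)
  convert hp using 1
  change diagonalAlgHom K _ = Polynomial.aeval (diagonalAlgHom K d) _
  rw [Polynomial.aeval_algHom_apply, Polynomial.aeval_pi_apply]
  congr 1
  ext j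
  rcases eq_or_ne j i with rfl | hji
  · simp [Lagrange.eval_basis_self hinj.injOn]
  · simp [Lagrange.eval_basis_of_ne hji.symm, hji]

namespace Submodule

variable {K ι : Type*} [Field K] [Fintype ι] [DecidableEq ι] {U : Submodule K (ι → K)}

theorem eq_top_of_forall_single_one_mem (h : ∀ i, Pi.single i 1 ∈ U) : U = ⊤ := by
  refine eq_top_iff'.2 fun v => ?_
  rw [← Finset.univ_sum_single v]
  refine sum_mem fun i _ => ?_
  simpa [← Pi.single_smul] using U.smul_mem (v i) (h i)

theorem single_apply_mem (hproj : ∀ i, diagonal (Pi.single i 1) ∈ U.matrixStabilizer)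
    {u : ι → K} (hu : u ∈ U) (i : ι) : Pi.single i (u i) ∈ U := by
  convert hproj i u hu using 1
  ext j
  rcases eq_or_ne j i with rfl | hji
  · simp [mulVec_diagonal]
  · simp [mulVec_diagonal, hji]

theorem single_one_mem_of_apply_ne_zero
    (hproj : ∀ i, diagonal (Pi.single i 1) ∈ U.matrixStabilizer) {u : ι → K} (hu : u ∈ U)
    {i : ι} (hi : u i ≠ 0) : Pi.single i 1 ∈ U := by
  simpa [← Pi.single_smul, hi] using U.smul_mem (u i)⁻¹ (single_apply_mem hproj hu i)

theorem single_one_mem_of_mem_matrixStabilizer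
    (hproj : ∀ i, diagonal (Pi.single i 1) ∈ U.matrixStabilizer) {A : Matrix ι ι K}
    (hA : A ∈ U.matrixStabilizer) {i j : ι} (hij : A i j ≠ 0) (hj : Pi.single j 1 ∈ U) :
    Pi.single i 1 ∈ U :=
  single_one_mem_of_apply_ne_zero hproj (hA _ hj) (by simpa [mulVec_single_one] using hij)

theorem eq_bot_or_eq_top_of_forall_single_one_mem_iff
    (hproj : ∀ i, diagonal (Pi.single i 1) ∈ U.matrixStabilizer) (i₀ : ι)
    (hconn : ∀ i, Pi.single i 1 ∈ U ↔ Pi.single i₀ 1 ∈ U) : U = ⊥ ∨ U = ⊤ := by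
  refine or_iff_not_imp_left.2 fun hU => ?_
  obtain ⟨u, hu, hu0⟩ := exists_mem_ne_zero_of_ne_bot hU
  obtain ⟨i, hi⟩ := Function.ne_iff.1 hu0
  have hi₀ := (hconn i).1 (single_one_mem_of_apply_ne_zero hproj hu hi)
  exact eq_top_of_forall_single_one_mem fun j => (hconn j).2 hi₀

end Submodule

open Submodule in
theorem m2vpt3_zeta2_irreducible_general (y0 y1 : ℂ) (h0 : y0 ≠ 0) (h1 : y1 ≠ 0) (hne : y0 ≠ y1)
    (U : Submodule ℂ (Fin 3 → ℂ))
    (hL12 : ∀ u ∈ U, (!![0, y0⁻¹, 0; y0, 0, 0; 0, 0, 1]).mulVec u ∈ U)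
    (hL23 : ∀ u ∈ U, (!![1, 0, 0; 0, 0, y0⁻¹; 0, y0, 0]).mulVec u ∈ U)
    (hM12 : ∀ u ∈ U, (!![y1 / y0, 0, 0; 0, y0 / y1, 0; 0, 0, 1]).mulVec u ∈ U)
    (hM13 : ∀ u ∈ U, (!![y1 / y0, 0, 0; 0, 1, 0; 0, 0, y0 / y1]).mulVec u ∈ U) :
    U = ⊥ ∨ U = ⊤ := by
  set c := y0 / y1 - 1
  have hc : c ≠ 0 := sub_ne_zero.2 fun h => hne ((div_eq_one_iff_eq h1).1 h)
  have hdiff : !![y1 / y0, 0, 0; 0, y0 / y1, 0; 0, 0, 1] - !![y1 / y0, 0, 0; 0, 1, 0; 0, 0, y0 / y1] =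
      diagonal ![0, c, -c] := by
    ext i j
    fin_cases i <;> fin_cases j <;> simp [c]
  have hinj : Function.Injective ![0, c, -c] := by
    intro a b
    fin_cases a <;> fin_cases b <;> simp [hc, hc.symm, self_eq_neg, _root_.neg_eq_self]
  have hD : diagonal ![0, c, -c] ∈ U.matrixStabilizer :=
    hdiff ▸ sub_mem (mem_matrixStabilizer.2 hM12) (mem_matrixStabilizer.2 hM13)
  have hproj := diagonal_single_one_mem_of_injective hD hinj
  refine eq_bot_or_eq_top_of_forall_single_one_mem_iff hproj 1 fun i => ?_
  fin_cases i
  · exact ⟨single_one_mem_of_mem_matrixStabilizer hproj hL12 (by simp [h0]),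
      single_one_mem_of_mem_matrixStabilizer hproj hL12 (by simp [h0])⟩
  · rfl
  · exact ⟨single_one_mem_of_mem_matrixStabilizer hproj hL23 (by simp [h0]),
      single_one_mem_of_mem_matrixStabilizer hproj hL23 (by simp [h0])⟩

/-- The six `3 × 3` matrices giving the images of the generators of `M₂VPT₃` under the
representation induced by `ζ₂`, with `y₀ ≠ y₁`, act irreducibly on `ℂ³`: the only
invariant subspaces are `0` and `ℂ³`. -/
theorem m2vpt3_zeta2_irreducible (y0 y1 : ℂ) (h0 : y0 ≠ 0) (h1 : y1 ≠ 0) (hne : y0 ≠ y1)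
    (U : Submodule ℂ (Fin 3 → ℂ))
    (hL12 : ∀ u ∈ U, (!![0, y0⁻¹, 0; y0, 0, 0; 0, 0, 1]).mulVec u ∈ U)
    (hL23 : ∀ u ∈ U, (!![1, 0, 0; 0, 0, y0⁻¹; 0, y0, 0]).mulVec u ∈ U)
    (hL13 : ∀ u ∈ U, (!![0, 0, (y0 ^ 2)⁻¹; 0, 1, 0; y0 ^ 2, 0, 0]).mulVec u ∈ U)
    (hM12 : ∀ u ∈ U, (!![y1 / y0, 0, 0; 0, y0 / y1, 0; 0, 0, 1]).mulVec u ∈ U)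
    (hM23 : ∀ u ∈ U, (!![1, 0, 0; 0, y1 / y0, 0; 0, 0, y0 / y1]).mulVec u ∈ U)
    (hM13 : ∀ u ∈ U, (!![y1 / y0, 0, 0; 0, 1, 0; 0, 0, y0 / y1]).mulVec u ∈ U) :
    U = ⊥ ∨ U = ⊤ :=
  m2vpt3_zeta2_irreducible_general y0 y1 h0 h1 hne U hL12 hL23 hM12 hM13
end

section
/- Let y_0, y_1, b ∈ ℂ*, a ∈ ℂ with a ≠ 0 and y_0² ≠ y_1². Consider the 3×3 matrices L12 = [[b/y_0, a/y_0, 0],[−a y_0, (1−a²)y_0/b, 0],[0,0,1]], L23 = [[1,0,0],[0, b/y_0, a/y_0],[0, −a y_0, (1−a²)y_0/b]], L13 = [[b/y_0, 0, a/y_0²],[0,1,0],[−a y_0², 0, (1−a²)y_0/b]], together with the diagonal matrices M12 = diag(y_1/y_0, y_0/y_1, 1), M23 = diag(1, y_1/y_0, y_0/y_1), M13 = diag(y_1/y_0, 1, y_0/y_1). Then the only subspaces of ℂ³ invariant under all six matrices are 0 and ℂ³. -/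
/-!
`M12` is diagonal with the three distinct eigenvalues `y₁/y₀`, `y₀/y₁`, `1`, so an invariant
subspace is spanned by the standard basis vectors it contains. Since `a ≠ 0`, `L12` links `e₀` and
`e₁` in both directions and `L13` links `e₀` and `e₂`, so a nonzero invariant subspace contains
all three.
-/

namespace Matrix

variable {ι K : Type*} [Fintype ι] [DecidableEq ι] [Field K]

open Polynomial in
theorem aeval_toLin'_diagonal (d : ι → K) (p : K[X]) :
    aeval (toLin' (diagonal d)) p = toLin' (diagonal fun j => p.eval (d j)) := by
  rw [show toLin' (diagonal d) = toLinAlgEquiv' (diagonalAlgHom K d) from rfl,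
    aeval_algHom_apply, aeval_algHom_apply, aeval_pi]
  rfl

/- The Lagrange basis polynomial of `d i`, evaluated at `diagonal d`, is the projection onto the
`i`-th coordinate axis. -/
theorem single_mem_of_diagonal_mulVec_mem {d : ι → K} (hd : Function.Injective d)
    {U : Submodule K (ι → K)} (hD : ∀ u ∈ U, diagonal d *ᵥ u ∈ U) {v : ι → K} (hv : v ∈ U)
    {i : ι} (hvi : v i ≠ 0) : Pi.single i 1 ∈ U := by
  have hp : (fun j => (Lagrange.basis Finset.univ d i).eval (d j)) = Pi.single i 1 := by
    ext j
    rcases eq_or_ne j i with rfl | hji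
    · simp [Lagrange.eval_basis_self hd.injOn]
    · simp [Lagrange.eval_basis_of_ne hji.symm, hji]
  have hproj := Polynomial.aeval_apply_smul_mem_of_le_comap hv (Lagrange.basis Finset.univ d i)
    (toLin' (diagonal d)) hD
  rw [aeval_toLin'_diagonal, hp, toLin'_apply] at hproj
  have hdiag : diagonal (Pi.single i 1) *ᵥ v = v i • Pi.single i 1 := by
    ext j
    rcases eq_or_ne j i with rfl | hji <;> simp [mulVec_diagonal, *]
  simpa [hdiag, Submodule.smul_mem_iff _ hvi] using hproj

theorem exists_single_mem_of_diagonal_mulVec_mem {d : ι → K} (hd : Function.Injective d)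
    {U : Submodule K (ι → K)} (hD : ∀ u ∈ U, diagonal d *ᵥ u ∈ U) (hU : U ≠ ⊥) :
    ∃ i, Pi.single i 1 ∈ U := by
  obtain ⟨v, hv, hv0⟩ := Submodule.exists_mem_ne_zero_of_ne_bot hU
  obtain ⟨i, hvi⟩ := Function.ne_iff.1 hv0
  exact ⟨i, single_mem_of_diagonal_mulVec_mem hd hD hv hvi⟩

theorem single_mem_of_mulVec_mem {d : ι → K} (hd : Function.Injective d)
    {U : Submodule K (ι → K)} (hD : ∀ u ∈ U, diagonal d *ᵥ u ∈ U) {A : Matrix ι ι K}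
    (hA : ∀ u ∈ U, A *ᵥ u ∈ U) {i j : ι} (hi : Pi.single i 1 ∈ U) (hji : A j i ≠ 0) :
    Pi.single j 1 ∈ U :=
  single_mem_of_diagonal_mulVec_mem hd hD (hA _ hi) (by rwa [mulVec_single_one])

end Matrix

theorem Submodule.eq_top_of_forall_single_mem {ι K : Type*} [Fintype ι] [DecidableEq ι]
    [Field K] {U : Submodule K (ι → K)} (h : ∀ i, Pi.single i 1 ∈ U) : U = ⊤ := by
  rw [eq_top_iff, ← (Pi.basisFun K ι).span_eq, Submodule.span_le]
  rintro _ ⟨i, rfl⟩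
  simpa using h i

theorem injective_vec3_div_div_one {K : Type*} [Field K] {y0 y1 : K} (h0 : y0 ≠ 0) (h1 : y1 ≠ 0)
    (hne : y0 ^ 2 ≠ y1 ^ 2) : Function.Injective ![y1 / y0, y0 / y1, 1] := by
  have h01 : y1 / y0 ≠ y0 / y1 := fun h => hne <| by
    rw [div_eq_div_iff h0 h1] at h
    linear_combination -h
  have h02 : y1 / y0 ≠ 1 := fun h => hne <| by rw [(div_eq_one_iff_eq h0).1 h]
  have h12 : y0 / y1 ≠ 1 := fun h => hne <| by rw [(div_eq_one_iff_eq h1).1 h]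
  intro i j
  fin_cases i <;> fin_cases j <;> simp [h01, h01.symm, h02, h02.symm, h12, h12.symm]

theorem m2vpt3_zeta8_irreducible_general (y0 y1 b a : ℂ) (h0 : y0 ≠ 0) (h1 : y1 ≠ 0)
    (ha : a ≠ 0) (hne : y0 ^ 2 ≠ y1 ^ 2)
    (U : Submodule ℂ (Fin 3 → ℂ))
    (hL12 : ∀ u ∈ U,
      (!![b / y0, a / y0, 0; -a * y0, (1 - a ^ 2) * y0 / b, 0; 0, 0, 1]).mulVec u ∈ U)
    (hL13 : ∀ u ∈ U,
      (!![b / y0, 0, a / y0 ^ 2; 0, 1, 0;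
          -a * y0 ^ 2, 0, (1 - a ^ 2) * y0 / b]).mulVec u ∈ U)
    (hM12 : ∀ u ∈ U, (!![y1 / y0, 0, 0; 0, y0 / y1, 0; 0, 0, 1]).mulVec u ∈ U) :
    U = ⊥ ∨ U = ⊤ := by
  have hd := injective_vec3_div_div_one h0 h1 hne
  have hD : ∀ u ∈ U, (Matrix.diagonal ![y1 / y0, y0 / y1, 1]).mulVec u ∈ U := by
    rwa [Matrix.diagonal_vec3]
  refine or_iff_not_imp_left.2 fun hU => ?_
  obtain ⟨i, hi⟩ := Matrix.exists_single_mem_of_diagonal_mulVec_mem hd hD hU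
  have he0 : Pi.single 0 1 ∈ U := by
    fin_cases i
    · exact hi
    · exact Matrix.single_mem_of_mulVec_mem hd hD hL12 hi (by simp [ha, h0])
    · exact Matrix.single_mem_of_mulVec_mem hd hD hL13 hi (by simp [ha, h0])
  refine Submodule.eq_top_of_forall_single_mem fun j => ?_
  fin_cases j
  · exact he0
  · exact Matrix.single_mem_of_mulVec_mem hd hD hL12 he0 (by simp [ha, h0])
  · exact Matrix.single_mem_of_mulVec_mem hd hD hL13 he0 (by simp [ha, h0])

/-- The six `3 × 3` matrices giving the images of the generators of `M₂VPT₃` under the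
representation induced by `ζ₈`, with `a ≠ 0` and `y₀² ≠ y₁²`, act irreducibly on `ℂ³`. -/
theorem m2vpt3_zeta8_irreducible (y0 y1 b a : ℂ) (h0 : y0 ≠ 0) (h1 : y1 ≠ 0) (hb : b ≠ 0)
    (ha : a ≠ 0) (hne : y0 ^ 2 ≠ y1 ^ 2)
    (U : Submodule ℂ (Fin 3 → ℂ))
    (hL12 : ∀ u ∈ U,
      (!![b / y0, a / y0, 0; -a * y0, (1 - a ^ 2) * y0 / b, 0; 0, 0, 1]).mulVec u ∈ U)
    (hL23 : ∀ u ∈ U,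
      (!![1, 0, 0; 0, b / y0, a / y0; 0, -a * y0, (1 - a ^ 2) * y0 / b]).mulVec u ∈ U)
    (hL13 : ∀ u ∈ U,
      (!![b / y0, 0, a / y0 ^ 2; 0, 1, 0;
          -a * y0 ^ 2, 0, (1 - a ^ 2) * y0 / b]).mulVec u ∈ U)
    (hM12 : ∀ u ∈ U, (!![y1 / y0, 0, 0; 0, y0 / y1, 0; 0, 0, 1]).mulVec u ∈ U)
    (hM23 : ∀ u ∈ U, (!![1, 0, 0; 0, y1 / y0, 0; 0, 0, y0 / y1]).mulVec u ∈ U)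
    (hM13 : ∀ u ∈ U, (!![y1 / y0, 0, 0; 0, 1, 0; 0, 0, y0 / y1]).mulVec u ∈ U) :
    U = ⊥ ∨ U = ⊤ :=
  m2vpt3_zeta8_irreducible_general y0 y1 b a h0 h1 ha hne U hL12 hL13 hM12
end
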